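/- arXiv:2208.00507 — 9 statements merged into one kernel-verified Lean document; each statement's English description precedes it below -/
import Mathlib

section
/- Let X be a Banach space with dual X*, T a topological space, and f : T × X → ℝ∪{±∞} such that the epigraph multifunction t ⇒ epi f_t := {(x,α) : f_t(x) ≤ α} is lower semicontinuous (as a set-valued map into X × ℝ). Then the map (t, x*) ↦ f_t*(x*) is lower semicontinuous on T × X*, where X* carries any topology making the duality pairing ⟨·,·⟩ : X × X* → ℝ jointly continuous, and f_t*(x*) := sup_{x ∈ X} (⟨x*, x⟩ − f_t(x)) is the Fenchel conjugate. -/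
open MeasureTheory Topology Filter Set Pointwise
open scoped ENNReal NNReal

noncomputable section

/-- Lower semicontinuity (in the set-valued sense) of `Φ` at every point of `B`,
relative to `B`. -/
def LscOn {T Y : Type*} [TopologicalSpace T] [TopologicalSpace Y]
    (B : Set T) (Φ : T → Set Y) : Prop :=
  ∀ t ∈ B, ∀ V : Set Y, IsOpen V → (Φ t ∩ V).Nonempty →
    ∀ᶠ s in nhdsWithin t B, (Φ s ∩ V).Nonempty

/-- Epigraph of an extended-real-valued function. -/
def epi {X : Type*} (g : X → EReal) : Set (X × ℝ) :=
  {p : X × ℝ | g p.1 ≤ (p.2 : EReal)}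

/-- Strict epigraph. -/
def epis {X : Type*} (g : X → EReal) : Set (X × ℝ) :=
  {p : X × ℝ | g p.1 < (p.2 : EReal)}

/-- Inner regularity of a measure: every measurable set of finite measure can be
approximated from inside by compact sets. -/
def InnerRegularM {T : Type*} [TopologicalSpace T] [MeasurableSpace T]
    (μ : Measure T) : Prop :=
  ∀ ε : ℝ≥0∞, 0 < ε → ∀ B : Set T, MeasurableSet B → μ B < ⊤ →
    ∃ K ⊆ B, IsCompact K ∧ μ (B \ K) < ε

/-- Lusin integrand. -/
def LusinIntegrand {T X : Type*} [TopologicalSpace T] [MeasurableSpace T]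
    [TopologicalSpace X] (μ : Measure T) (f : T → X → EReal) : Prop :=
  ∀ ε : ℝ≥0∞, 0 < ε → ∀ A : Set T, MeasurableSet A → μ A < ⊤ →
    ∃ B ⊆ A, IsCompact B ∧ μ (A \ B) < ε ∧ LscOn B (fun t => epi (f t))

/-- Uniform Lusin family of integrands. -/
def UniformLusinFamily {T X I : Type*} [TopologicalSpace T] [MeasurableSpace T]
    [TopologicalSpace X] (μ : Measure T) (f : I → T → X → EReal) : Prop :=
  ∀ ε : ℝ≥0∞, 0 < ε → ∀ A : Set T, MeasurableSet A → μ A < ⊤ →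
    ∃ B ⊆ A, IsCompact B ∧ μ (A \ B) < ε ∧ ∀ i : I, LscOn B (fun t => epi (f i t))

/-- Scorza-Dragoni function. -/
def ScorzaDragoniFun {T X : Type*} [TopologicalSpace T] [MeasurableSpace T]
    [TopologicalSpace X] (μ : Measure T) (g : T → X → EReal) : Prop :=
  ∀ ε : ℝ≥0∞, 0 < ε → ∀ A : Set T, MeasurableSet A → μ A < ⊤ →
    ∃ B ⊆ A, IsCompact B ∧ μ (A \ B) < ε ∧
      ContinuousOn (fun p : T × X => g p.1 p.2) (B ×ˢ (Set.univ : Set X))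

/-- Lusin multifunction (uniform family version). -/
def UniformLusinMultifamily {T X I : Type*} [TopologicalSpace T] [MeasurableSpace T]
    [TopologicalSpace X] (μ : Measure T) (C : I → T → Set X) : Prop :=
  ∀ ε : ℝ≥0∞, 0 < ε → ∀ A : Set T, MeasurableSet A → μ A < ⊤ →
    ∃ B ⊆ A, IsCompact B ∧ μ (A \ B) < ε ∧ ∀ i : I, LscOn B (C i)

/-- `g ∈ Γ(X)`: proper, convex (convex epigraph) and lower semicontinuous. -/
def InGamma {X : Type*} [AddCommGroup X] [Module ℝ X] [TopologicalSpace X]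
    (g : X → EReal) : Prop :=
  (∃ x, g x ≠ ⊤) ∧ (∀ x, g x ≠ ⊥) ∧ LowerSemicontinuous g ∧ Convex ℝ (epi g)

/-- Admissible integrand. -/
def AdmissibleIntegrand {T X : Type*} [TopologicalSpace T] [MeasurableSpace T]
    [NormedAddCommGroup X] [NormedSpace ℝ X] (μ : Measure T)
    (f : T → X → EReal) : Prop :=
  ∃ (I : Type) (fi : I → T → X → EReal),
    UniformLusinFamily μ fi ∧ (∀ i t, InGamma (fi i t)) ∧
    ∀ t, epi (f t) = closure (epi (fun x => ⨅ i : I, fi i t x))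

/-- Admissible multifunction. -/
def AdmissibleMultifunction {T X : Type*} [TopologicalSpace T] [MeasurableSpace T]
    [NormedAddCommGroup X] [NormedSpace ℝ X] (μ : Measure T)
    (C : T → Set X) : Prop :=
  ∃ (I : Type) (Ci : I → T → Set X),
    UniformLusinMultifamily μ Ci ∧ (∀ i t, IsClosed (Ci i t) ∧ Convex ℝ (Ci i t)) ∧
    ∀ t, C t = closure (⋃ i : I, Ci i t)

open Classical in
/-- Indicator function with values in `EReal`. -/
def indE {X : Type*} (S : Set X) : X → EReal := fun x => if x ∈ S then 0 else ⊤

/-- Positive part of an extended real, as an `ℝ≥0∞`. -/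
def ERealPos (x : EReal) : ℝ≥0∞ := if x = ⊤ then ⊤ else ENNReal.ofReal x.toReal

/-- Upper integral of an extended-real-valued function, with the convention
`+∞ + (-∞) = +∞`. -/
def upInt {T : Type*} [MeasurableSpace T] (μ : Measure T) (g : T → EReal) : EReal :=
  if (∫⁻ t, ERealPos (g t) ∂μ) = ⊤ then ⊤
  else ((∫⁻ t, ERealPos (g t) ∂μ : ℝ≥0∞) : EReal) - ((∫⁻ t, ERealPos (-(g t)) ∂μ : ℝ≥0∞) : EReal)

end


/-!
Over the epigraph, `f_t*(x*) = sup {⟨x*, x⟩ - α : (x, α) ∈ epi f_t}`, so the conjugate is the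
marginal function of the jointly continuous `((x, α), x*) ↦ ⟨x*, x⟩ - α` over the multifunction
`t ⇒ epi f_t`; a supremum of a lower semicontinuous function over a lower semicontinuous
multifunction is lower semicontinuous.
-/

theorem EReal.exists_real_ge_lt_coe_sub {c e : EReal} {a : ℝ} (h : c < (a : EReal) - e) :
    ∃ β : ℝ, e ≤ β ∧ c < ((a - β : ℝ) : EReal) := by
  obtain ⟨r, hcr, hra⟩ := EReal.lt_iff_exists_real_btwn.mp h
  refine ⟨a - r, ?_, by simpa using hcr⟩
  rw [EReal.coe_sub,
    EReal.le_sub_iff_add_le (.inl (EReal.coe_ne_bot r)) (.inl (EReal.coe_ne_top r))]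
  exact add_comm e _ ▸ (EReal.add_lt_of_lt_sub hra).le

theorem iSup_coe_sub_eq_iSup_epi {X : Type*} (a : X → ℝ) (g : X → EReal) :
    ⨆ x, ((a x : EReal) - g x) = ⨆ p ∈ epi g, ((a p.1 - p.2 : ℝ) : EReal) := by
  refine le_antisymm (iSup_le fun x => le_of_forall_lt fun c hc => ?_) (iSup₂_le fun p hp => ?_)
  · obtain ⟨β, hgβ, hcβ⟩ := EReal.exists_real_ge_lt_coe_sub hc
    exact hcβ.trans_le
      (le_iSup₂_of_le (f := fun p (_ : p ∈ epi g) => ((a p.1 - p.2 : ℝ) : EReal)) (x, β) hgβ le_rfl)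
  · rw [EReal.coe_sub]
    exact (EReal.sub_le_sub le_rfl hp).trans (le_iSup (fun x => (a x : EReal) - g x) p.1)

theorem LscOn.lowerSemicontinuous_iSup_mem {T Z Y β : Type*} [TopologicalSpace T]
    [TopologicalSpace Z] [TopologicalSpace Y] [CompleteLinearOrder β]
    {Φ : T → Set Z} (hΦ : LscOn univ Φ) {g : Z × Y → β} (hg : LowerSemicontinuous g) :
    LowerSemicontinuous fun p : T × Y => ⨆ z ∈ Φ p.1, g (z, p.2) := by
  rintro ⟨t, y⟩ c hc
  obtain ⟨z, hzΦ, hcz⟩ := by simpa only [lt_iSup_iff, exists_prop] using hc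
  obtain ⟨V, W, hV, hW, hzV, hyW, hVW⟩ :=
    isOpen_prod_iff.mp (hg.isOpen_preimage c) z y hcz
  have hΦV : ∀ᶠ s in 𝓝 t, (Φ s ∩ V).Nonempty := by
    simpa only [nhdsWithin_univ] using hΦ t (mem_univ t) V hV ⟨z, hzΦ, hzV⟩
  rw [nhds_prod_eq]
  filter_upwards [hΦV.prod_mk (hW.mem_nhds hyW)] with ⟨s, y'⟩ ⟨⟨z', hz'Φ, hz'V⟩, hy'W⟩
  exact (hVW (mk_mem_prod hz'V hy'W)).trans_le (le_iSup₂_of_le z' hz'Φ le_rfl)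

theorem lowerSemicontinuous_iSup_coe_sub {T X Y : Type*} [TopologicalSpace T]
    [TopologicalSpace X] [TopologicalSpace Y] {b : X × Y → ℝ} (hb : Continuous b)
    {f : T → X → EReal} (hf : LscOn univ fun t => epi (f t)) :
    LowerSemicontinuous fun p : T × Y => ⨆ x, ((b (x, p.2) : EReal) - f p.1 x) := by
  simp_rw [iSup_coe_sub_eq_iSup_epi]
  refine hf.lowerSemicontinuous_iSup_mem
    (g := fun q : (X × ℝ) × Y => ((b (q.1.1, q.2) - q.1.2 : ℝ) : EReal))
    (continuous_coe_real_ereal.comp ?_).lowerSemicontinuous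
  fun_prop

theorem stmt1_general {T X : Type*} [TopologicalSpace T]
    [NormedAddCommGroup X] [NormedSpace ℝ X]
    (τ : TopologicalSpace (X →L[ℝ] ℝ))
    (hpair : @Continuous (X × (X →L[ℝ] ℝ)) ℝ (@instTopologicalSpaceProd _ _ _ τ) _
      (fun p => p.2 p.1))
    (f : T → X → EReal)
    (hf : LscOn (Set.univ : Set T) (fun t => epi (f t))) :
    @LowerSemicontinuous (T × (X →L[ℝ] ℝ)) EReal (@instTopologicalSpaceProd _ _ _ τ) _
      (fun p => ⨆ x : X, ((p.2 x : EReal) - f p.1 x)) :=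
  @lowerSemicontinuous_iSup_coe_sub T X (X →L[ℝ] ℝ) _ _ τ _ hpair f hf

/-- if the epigraph multifunction is lsc, then the conjugate
`(t, x*) ↦ f_t*(x*)` is jointly lower semicontinuous, for any topology on the dual
making the duality pairing jointly continuous. -/
theorem stmt1 {T X : Type*} [TopologicalSpace T]
    [NormedAddCommGroup X] [NormedSpace ℝ X] [CompleteSpace X]
    (τ : TopologicalSpace (X →L[ℝ] ℝ))
    (hpair : @Continuous (X × (X →L[ℝ] ℝ)) ℝ (@instTopologicalSpaceProd _ _ _ τ) _
      (fun p => p.2 p.1))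
    (f : T → X → EReal)
    (hf : LscOn (Set.univ : Set T) (fun t => epi (f t))) :
    @LowerSemicontinuous (T × (X →L[ℝ] ℝ)) EReal (@instTopologicalSpaceProd _ _ _ τ) _
      (fun p => ⨆ x : X, ((p.2 x : EReal) - f p.1 x)) :=
  stmt1_general τ hpair f hf
end

section
/- Let T be a topological space, X a Banach space, and f : T × X → ℝ∪{±∞} such that the epigraph multifunction t ⇒ epi f_t is lower semicontinuous. Then the infimal value function m_f(t) := inf_{x ∈ X} f_t(x) is upper semicontinuous on T. -/
open MeasureTheory Topology Filter Set Pointwise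
open scoped ENNReal NNReal

/-- if the epigraph multifunction is lsc, then the infimal value function
`m_f(t) = inf_x f_t(x)` is upper semicontinuous. -/
theorem stmt2 {T X : Type*} [TopologicalSpace T]
    [NormedAddCommGroup X] [NormedSpace ℝ X] [CompleteSpace X]
    (f : T → X → EReal)
    (hf : LscOn (Set.univ : Set T) (fun t => epi (f t))) :
    UpperSemicontinuous (fun t => ⨅ x : X, f t x) := by
  intro t₀ y hy
  simp only at hy ⊢
  have hx : ∃ x : X, f t₀ x < y := by
    by_contra h
    push_neg at h
    exact absurd (le_iInf h) (not_le.mpr hy)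
  obtain ⟨x, hxy⟩ := hx
  obtain ⟨r, hr1, hr2⟩ := EReal.exists_between_coe_real hxy
  set V : Set (X × ℝ) := {p : X × ℝ | (p.2 : EReal) < y} with hV
  have hVopen : IsOpen V := by
    have : V = Prod.snd ⁻¹' ((fun a : ℝ => (a : EReal)) ⁻¹' Set.Iio y) := rfl
    rw [this]
    exact (isOpen_Iio.preimage continuous_coe_real_ereal).preimage continuous_snd
  have hne : (epi (f t₀) ∩ V).Nonempty := ⟨(x, r), le_of_lt hr1, hr2⟩
  have := hf t₀ (Set.mem_univ _) V hVopen hne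
  rw [nhdsWithin_univ] at this
  filter_upwards [this] with t ⟨p, hp1, hp2⟩
  exact lt_of_le_of_lt (iInf_le _ p.1) (lt_of_le_of_lt hp1 hp2)
end

section
/- Let (T,d) be a metric space, X a Banach space, and f : T × X → ℝ∪{±∞} such that the epigraph multifunction t ⇒ epi f_t is lower semicontinuous and each f_t is lower semicontinuous on X. Then for every continuous function φ : T → X the map t ↦ f_t(φ(t)) is Borel measurable. -/
open MeasureTheory Topology Filter Set Pointwise
open scoped ENNReal NNReal

/-- if the epigraph multifunction is lsc and each `f_t` is lsc, then
`t ↦ f_t(φ(t))` is Borel measurable for every continuous `φ`. -/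
theorem stmt3 {T X : Type*} [MetricSpace T] [MeasurableSpace T] [BorelSpace T]
    [NormedAddCommGroup X] [NormedSpace ℝ X] [CompleteSpace X]
    (f : T → X → EReal)
    (hf : LscOn (Set.univ : Set T) (fun t => epi (f t)))
    (hlsc : ∀ t, LowerSemicontinuous (f t))
    (φ : T → X) (hφ : Continuous φ) :
    Measurable (fun t => f t (φ t)) := by
  -- approximating functions
  set g : ℕ → T → EReal := fun k t => ⨅ x : Metric.ball (φ t) (1 / (k + 1)), f t x with hg
  have hpos : ∀ k : ℕ, (0:ℝ) < 1 / (k + 1) := by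
    intro k; positivity
  -- each g k is upper semicontinuous
  have husc : ∀ k, UpperSemicontinuous (g k) := by
    intro k t y hy
    rw [hg] at hy
    simp only [iInf_lt_iff] at hy
    obtain ⟨⟨x, hx⟩, hxy⟩ := hy
    obtain ⟨r, hr1, hr2⟩ := EReal.exists_between_coe_real hxy
    obtain ⟨r', hr'1, hr'2⟩ := EReal.exists_between_coe_real hr1
    rw [Metric.mem_ball] at hx
    set δ : ℝ := (1 / (k + 1) - dist x (φ t)) / 3 with hδ
    have hδpos : 0 < δ := by rw [hδ]; linarith
    set V : Set (X × ℝ) := Metric.ball x δ ×ˢ Set.Iio r with hV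
    have hVopen : IsOpen V := Metric.isOpen_ball.prod isOpen_Iio
    have hne : (epi (f t) ∩ V).Nonempty := by
      refine ⟨(x, r'), ?_, ?_⟩
      · exact le_of_lt hr'1
      · exact ⟨Metric.mem_ball_self hδpos, by exact_mod_cast EReal.coe_lt_coe_iff.mp hr'2⟩
    have h1 := hf t (Set.mem_univ t) V hVopen hne
    rw [nhdsWithin_univ] at h1
    have h2 : ∀ᶠ s in 𝓝 t, dist (φ s) (φ t) < δ :=
      Metric.tendsto_nhds.mp (hφ.tendsto t) δ hδpos
    filter_upwards [h1, h2] with s hs hds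
    obtain ⟨⟨z, β⟩, hzep, hzb, hβ⟩ := hs
    have hzball : z ∈ Metric.ball (φ s) (1 / (k + 1)) := by
      rw [Metric.mem_ball]
      have h3 : dist z (φ s) ≤ dist z x + dist x (φ t) + dist (φ t) (φ s) := by
        calc dist z (φ s) ≤ dist z x + dist x (φ s) := dist_triangle _ _ _
        _ ≤ dist z x + (dist x (φ t) + dist (φ t) (φ s)) := by
              gcongr; exact dist_triangle _ _ _
        _ = dist z x + dist x (φ t) + dist (φ t) (φ s) := by ring
      have h4 : dist z x < δ := Metric.mem_ball.mp hzb
      have h5 : dist (φ t) (φ s) < δ := by rw [dist_comm]; exact hds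
      have : dist z (φ s) < dist x (φ t) + 2 * δ := by linarith
      have h6 : dist x (φ t) + 2 * δ < 1 / (k + 1) := by rw [hδ]; linarith
      linarith
    have : g k s ≤ f s z := iInf_le _ (⟨z, hzball⟩ : Metric.ball (φ s) (1 / (k + 1)))
    calc g k s ≤ f s z := this
    _ ≤ (β : EReal) := hzep
    _ < (r : EReal) := by exact_mod_cast hβ
    _ < y := hr2
  -- f t (φ t) = sup of g k t
  have hsup : ∀ t, f t (φ t) = ⨆ k, g k t := by
    intro t
    apply le_antisymm
    · refine le_of_forall_lt fun y hy => ?_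
      obtain ⟨y', hy'1, hy'2⟩ := exists_between hy
      obtain ⟨ε, hεpos, hε⟩ := Metric.eventually_nhds_iff_ball.mp (hlsc t (φ t) y' hy'2)
      obtain ⟨k, hk⟩ := exists_nat_one_div_lt hεpos
      have hle : y' ≤ g k t := by
        rw [hg]
        refine le_iInf fun ⟨x, hx⟩ => le_of_lt (hε x ?_)
        exact Metric.ball_subset_ball (le_of_lt (by exact_mod_cast hk)) hx
      calc y < y' := hy'1
      _ ≤ g k t := hle
      _ ≤ ⨆ k, g k t := le_iSup (fun k => g k t) k
    · refine iSup_le fun k => ?_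
      exact iInf_le _ (⟨φ t, Metric.mem_ball_self (hpos k)⟩ : Metric.ball (φ t) (1 / (k + 1)))
  have : (fun t => f t (φ t)) = fun t => ⨆ k, g k t := funext hsup
  rw [this]
  exact Measurable.iSup fun k => (husc k).measurable
end

section
/- Let (T,d) be a metric space, X a Banach space, f : T × X → ℝ∪{±∞}, and B ⊆ T such that the restricted epigraph multifunction B ∋ t ⇒ epi f_t is lower semicontinuous with closed convex values. Suppose α : B → ℝ∪{±∞} is lower semicontinuous with m_f(t) := inf_{x∈X} f_t(x) < α(t) for all t ∈ B. Then there exists a continuous function x : B → X with f_t(x(t)) ≤ α(t) for all t ∈ B. -/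
open MeasureTheory Topology Filter Set Pointwise
open scoped ENNReal NNReal

/-!
The strict sublevel multifunction `t ↦ {x | f t x < α t}` has nonempty convex values and is lower
semicontinuous: a point of `epi (f t)` strictly below `α t` is approximated by points of
`epi (f s)`, which stay strictly below `α s` by lower semicontinuity of `α`. Michael's selection
theorem then gives a continuous `x` with `x t` in the closure of the strict sublevel set, and that
closure lies in `{x | f t x ≤ α t}` because the epigraph is closed.

Michael's theorem is proved in the usual way: a partition of unity turns lower
semicontinuity into continuous `δ`-approximate selections, applying this to
`s ↦ Φ s ∩ ball (g s) ε` keeps the new approximate selection `ε + δ`-close to the previous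
one, and the geometric sequence of such approximations converges uniformly.
-/

open Metric

theorem exists_tendstoUniformly_of_dist_le_geometric {S X : Type*} [PseudoMetricSpace X]
    [CompleteSpace X] {u : ℕ → S → X} {r C : ℝ} (hr₀ : 0 ≤ r) (hr₁ : r < 1)
    (hu : ∀ n s, dist (u n s) (u (n + 1) s) ≤ C * r ^ n) :
    ∃ L : S → X, TendstoUniformly u L atTop := by
  choose L hL using fun s =>
    cauchySeq_tendsto_of_complete (cauchySeq_of_le_geometric r C hr₁ (hu · s))
  refine ⟨L, Metric.tendstoUniformly_iff.2 fun ε hε => ?_⟩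
  have hbound : Tendsto (fun n : ℕ => C * r ^ n / (1 - r)) atTop (𝓝 0) := by
    simpa using ((tendsto_pow_atTop_nhds_zero_of_lt_one hr₀ hr₁).const_mul C).div_const (1 - r)
  filter_upwards [hbound.eventually (gt_mem_nhds hε)] with n hn s
  rw [dist_comm]
  exact (dist_le_of_le_geometric_of_tendsto r C hr₁ (hu · s) (hL s) n).trans_lt hn

section LscOn

variable {T X : Type*} [TopologicalSpace T]

theorem LscOn.restrict [TopologicalSpace X] {B : Set T} {Φ : T → Set X} (hΦ : LscOn B Φ) :
    LscOn univ (fun b : B => Φ b) := by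
  intro b _ V hV hne
  rw [nhdsWithin_univ]
  exact (eventually_nhds_subtype_iff B b fun s => (Φ s ∩ V).Nonempty).2 (hΦ b b.2 V hV hne)

theorem LscOn.setOf_lt [TopologicalSpace X] {B : Set T} {f : T → X → EReal} {α : T → EReal}
    (hf : LscOn B (fun t => epi (f t))) (hα : LowerSemicontinuousOn α B) :
    LscOn B (fun t => {x | f t x < α t}) := by
  rintro t ht V hV ⟨x₀, hx₀, hx₀V⟩
  obtain ⟨c, hx₀c, hcα⟩ := EReal.exists_between_coe_real (show f t x₀ < α t from hx₀)
  obtain ⟨c', hx₀c', hc'c⟩ := EReal.exists_between_coe_real hx₀c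
  have hne : (epi (f t) ∩ V ×ˢ Iio c).Nonempty :=
    ⟨(x₀, c'), hx₀c'.le, hx₀V, EReal.coe_lt_coe_iff.1 hc'c⟩
  filter_upwards [hf t ht _ (hV.prod isOpen_Iio) hne, hα t ht _ hcα]
    with s ⟨⟨x, a⟩, hxa, hxV, hac⟩ hcs
  exact ⟨x, (hxa.trans_lt (EReal.coe_lt_coe_iff.2 hac)).trans hcs, hxV⟩

theorem LscOn.eventually_mem_thickening [PseudoMetricSpace X] {Φ : T → Set X}
    (hΦ : LscOn univ Φ) {t : T} {y : X} (hy : y ∈ Φ t) {δ : ℝ} (hδ : 0 < δ) :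
    ∀ᶠ s in 𝓝 t, y ∈ thickening δ (Φ s) := by
  have := hΦ t (mem_univ t) (ball y δ) isOpen_ball ⟨y, hy, mem_ball_self hδ⟩
  rw [nhdsWithin_univ] at this
  filter_upwards [this] with s ⟨z, hz, hzy⟩
  exact mem_thickening_iff.2 ⟨z, hz, by rwa [dist_comm]⟩

theorem LscOn.inter_ball [PseudoMetricSpace X] {Φ : T → Set X} (hΦ : LscOn univ Φ)
    (g : C(T, X)) (ε : ℝ) : LscOn univ (fun t => Φ t ∩ ball (g t) ε) := by
  rintro t - V hV ⟨x, ⟨hxΦ, hxg⟩, hxV⟩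
  obtain ⟨η, hη, rfl⟩ : ∃ η, 0 < η ∧ ε = dist x (g t) + η :=
    ⟨ε - dist x (g t), sub_pos.2 hxg, by ring⟩
  have hne : (Φ t ∩ (V ∩ ball x (η / 2))).Nonempty :=
    ⟨x, hxΦ, hxV, mem_ball_self (by positivity)⟩
  have hg : ∀ᶠ s in 𝓝 t, dist (g s) (g t) < η / 2 :=
    Metric.tendsto_nhds.1 (g.continuous.tendsto t) _ (by positivity)
  have hΦt := hΦ t (mem_univ t) _ (hV.inter isOpen_ball) hne
  rw [nhdsWithin_univ] at hΦt ⊢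
  filter_upwards [hΦt, hg] with s ⟨y, hyΦ, hyV, hyx⟩ hgs
  refine ⟨y, ⟨hyΦ, ?_⟩, hyV⟩
  calc dist y (g s) ≤ dist y x + dist x (g t) + dist (g t) (g s) := dist_triangle4 _ _ _ _
    _ < η / 2 + dist x (g t) + η / 2 := by
        gcongr
        · exact hyx
        · rwa [dist_comm]
    _ = dist x (g t) + η := by ring

end LscOn

section Selection

variable {S X : Type*} [TopologicalSpace S] [NormalSpace S] [ParacompactSpace S]
  [NormedAddCommGroup X] [NormedSpace ℝ X] {Φ : S → Set X}

theorem exists_continuous_forall_mem_thickening (hΦ : LscOn univ Φ)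
    (hconv : ∀ s, Convex ℝ (Φ s)) (hne : ∀ s, (Φ s).Nonempty) {δ : ℝ} (hδ : 0 < δ) :
    ∃ g : C(S, X), ∀ s, g s ∈ thickening δ (Φ s) :=
  exists_continuous_forall_mem_convex_of_local_const (fun s => (hconv s).thickening δ)
    fun s => let ⟨y, hy⟩ := hne s; ⟨y, hΦ.eventually_mem_thickening hy hδ⟩

theorem exists_continuous_forall_mem_thickening_of_mem_thickening (hΦ : LscOn univ Φ)
    (hconv : ∀ s, Convex ℝ (Φ s)) {ε δ : ℝ} (hδ : 0 < δ) (g : C(S, X))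
    (hg : ∀ s, g s ∈ thickening ε (Φ s)) :
    ∃ h : C(S, X), (∀ s, h s ∈ thickening δ (Φ s)) ∧
      ∀ s, dist (h s) (g s) < ε + δ := by
  have hne : ∀ s, (Φ s ∩ ball (g s) ε).Nonempty := fun s => by
    obtain ⟨z, hz, hgz⟩ := mem_thickening_iff.1 (hg s)
    exact ⟨z, hz, by rwa [mem_ball, dist_comm]⟩
  obtain ⟨h, hh⟩ := exists_continuous_forall_mem_thickening (hΦ.inter_ball g ε)
    (fun s => (hconv s).inter (convex_ball _ _)) hne hδ
  refine ⟨h, fun s => thickening_subset_of_subset δ inter_subset_left (hh s), fun s => ?_⟩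
  obtain ⟨z, ⟨-, hzg⟩, hhz⟩ := mem_thickening_iff.1 (hh s)
  calc dist (h s) (g s) ≤ dist (h s) z + dist z (g s) := dist_triangle _ _ _
    _ < δ + ε := add_lt_add hhz hzg
    _ = ε + δ := add_comm _ _

/-- **Michael's selection theorem**, for values that need not be closed. -/
theorem exists_continuous_forall_mem_closure [CompleteSpace X] (hΦ : LscOn univ Φ)
    (hconv : ∀ s, Convex ℝ (Φ s)) (hne : ∀ s, (Φ s).Nonempty) :
    ∃ g : C(S, X), ∀ s, g s ∈ closure (Φ s) := by
  obtain ⟨g₀, hg₀⟩ := exists_continuous_forall_mem_thickening hΦ hconv hne one_pos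
  have step : ∀ (n : ℕ) (g : C(S, X)), (∀ s, g s ∈ thickening ((1 / 2) ^ n) (Φ s)) →
      ∃ h : C(S, X), (∀ s, h s ∈ thickening ((1 / 2) ^ (n + 1)) (Φ s)) ∧
        ∀ s, dist (g s) (h s) ≤ 2 * (1 / 2) ^ n := fun n g hg => by
    obtain ⟨h, hh, hdist⟩ :=
      exists_continuous_forall_mem_thickening_of_mem_thickening hΦ hconv
        (δ := (1 / 2) ^ (n + 1)) (by positivity) g hg
    refine ⟨h, hh, fun s => (dist_comm (g s) (h s)).trans_le ((hdist s).le.trans ?_)⟩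
    rw [pow_succ]
    linarith [pow_nonneg (by norm_num : (0 : ℝ) ≤ 1 / 2) n]
  choose! next hnext hdist using step
  let u : ℕ → C(S, X) := fun n => Nat.rec g₀ next n
  have hu : ∀ n s, u n s ∈ thickening ((1 / 2) ^ n) (Φ s) := by
    intro n
    induction n with
    | zero => rw [pow_zero]; exact hg₀
    | succ n ih => exact hnext n (u n) ih
  obtain ⟨L, hL⟩ := exists_tendstoUniformly_of_dist_le_geometric (u := fun n s => u n s)
    (by norm_num) (by norm_num) fun n => hdist n (u n) (hu n)
  refine ⟨⟨L, hL.continuous (Frequently.of_forall fun n => (u n).continuous)⟩, fun s => ?_⟩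
  rw [closure_eq_iInter_cthickening, mem_iInter₂]
  intro δ hδ
  refine isClosed_cthickening.mem_of_tendsto (hL.tendsto_at s) ?_
  filter_upwards [(tendsto_pow_atTop_nhds_zero_of_lt_one (by norm_num : (0 : ℝ) ≤ 1 / 2)
    (by norm_num)).eventually (ge_mem_nhds hδ)] with n hn
  exact thickening_subset_cthickening_of_le hn _ (hu n s)

end Selection

section Sublevel

variable {X : Type*} {g : X → EReal}

theorem convex_setOf_lt_of_convex_epi [AddCommGroup X] [Module ℝ X] (hg : Convex ℝ (epi g))
    (c : EReal) : Convex ℝ {x | g x < c} := by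
  intro x hx y hy a b ha hb hab
  obtain ⟨r, hr, hrc⟩ := EReal.exists_between_coe_real (max_lt (show g x < c from hx) hy)
  have hxr : (x, r) ∈ epi g := (le_max_left _ _).trans hr.le
  have hyr : (y, r) ∈ epi g := (le_max_right _ _).trans hr.le
  have hcomb : g (a • x + b • y) ≤ ((a * r + b * r : ℝ) : EReal) := hg hxr hyr ha hb hab
  rw [← add_mul, hab, one_mul] at hcomb
  exact hcomb.trans_lt hrc

theorem closure_setOf_lt_subset_of_isClosed_epi [TopologicalSpace X] (hg : IsClosed (epi g))
    (c : EReal) : closure {x | g x < c} ⊆ {x | g x ≤ c} := by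
  induction c using EReal.rec with
  | bot => simp
  | coe a =>
    exact closure_minimal (fun x (hx : g x < a) => hx.le)
      (hg.preimage (continuous_id.prodMk continuous_const))
  | top => exact fun x _ => (le_top : g x ≤ ⊤)

end Sublevel

/-- continuous selection below a lower semicontinuous bound strictly
above the infimal value function. -/
theorem stmt4 {T X : Type*} [MetricSpace T]
    [NormedAddCommGroup X] [NormedSpace ℝ X] [CompleteSpace X]
    (f : T → X → EReal) (B : Set T)
    (hlsc : LscOn B (fun t => epi (f t)))
    (hcc : ∀ t ∈ B, IsClosed (epi (f t)) ∧ Convex ℝ (epi (f t)))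
    (α : T → EReal) (hα : LowerSemicontinuousOn α B)
    (hlt : ∀ t ∈ B, (⨅ x : X, f t x) < α t) :
    ∃ x : T → X, ContinuousOn x B ∧ ∀ t ∈ B, f t (x t) ≤ α t := by
  classical
  obtain ⟨g, hg⟩ := exists_continuous_forall_mem_closure (hlsc.setOf_lt hα).restrict
    (fun b => convex_setOf_lt_of_convex_epi (hcc b b.2).2 _)
    (fun b => iInf_lt_iff.1 (hlt b b.2))
  refine ⟨fun t => if ht : t ∈ B then g ⟨t, ht⟩ else 0, ?_, fun t ht => ?_⟩
  · rw [continuousOn_iff_continuous_domRestrict, domRestrict_dite]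
    exact g.continuous
  · simp only [dif_pos ht]
    exact closure_setOf_lt_subset_of_isClosed_epi (hcc t ht).1 _ (hg ⟨t, ht⟩)
end

section
/- Let f : T × X → ℝ∪{±∞} be a Lusin integrand (on a complete σ-finite measure space with inner regular measure) and let cl(f) denote the integrand whose sections have epigraphs epi cl(f)_t = cl(epi f_t). Then cl(f) is a Lusin integrand. -/
open MeasureTheory Topology Filter Set Pointwise
open scoped ENNReal NNReal

lemma closure_inter_open_nonempty {Y : Type*} [TopologicalSpace Y] {S V : Set Y}
    (hV : IsOpen V) : (closure S ∩ V).Nonempty ↔ (S ∩ V).Nonempty := by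
  constructor
  · rintro ⟨x, hx, hxV⟩
    rcases mem_closure_iff.1 hx V hV hxV with ⟨y, hyV, hyS⟩
    exact ⟨y, hyS, hyV⟩
  · rintro ⟨x, hx, hxV⟩
    exact ⟨x, subset_closure hx, hxV⟩

/-- the lower closure of a Lusin integrand (the integrand whose sectional
epigraphs are the closures of the original ones) is a Lusin integrand. -/
theorem stmt9 {T X : Type*} [TopologicalSpace T] [MeasurableSpace T]
    [NormedAddCommGroup X] [NormedSpace ℝ X] [CompleteSpace X]
    (μ : MeasureTheory.Measure T) [MeasureTheory.SigmaFinite μ] [μ.IsComplete]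
    (hreg : InnerRegularM μ)
    (f g : T → X → EReal) (hf : LusinIntegrand μ f)
    (hcl : ∀ t, epi (g t) = closure (epi (f t))) :
    LusinIntegrand μ g := by
  intro ε hε A hA hAfin
  obtain ⟨B, hBA, hBc, hBm, hlsc⟩ := hf ε hε A hA hAfin
  refine ⟨B, hBA, hBc, hBm, ?_⟩
  intro t ht V hV hne
  have hne' : (epi (f t) ∩ V).Nonempty := by
    simp only [hcl] at hne
    exact (closure_inter_open_nonempty hV).1 hne
  filter_upwards [hlsc t ht V hV hne'] with s hs
  show ((fun t => epi (g t)) s ∩ V).Nonempty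
  simp only [hcl]
  exact (closure_inter_open_nonempty hV).2 hs
end

section
/- Let {f^i : T × X → ℝ∪{±∞}}_{i∈I} be a uniform Lusin family. Then the pointwise infimum f_t(x) := inf_{i∈I} f^i_t(x) is a Lusin integrand. -/
open MeasureTheory Topology Filter Set Pointwise
open scoped ENNReal NNReal

/-- the pointwise infimum of a uniform Lusin family is a Lusin integrand. -/
theorem stmt11 {T X I : Type*} [TopologicalSpace T] [MeasurableSpace T]
    [NormedAddCommGroup X] [NormedSpace ℝ X] [CompleteSpace X]
    (μ : MeasureTheory.Measure T) [MeasureTheory.SigmaFinite μ] [μ.IsComplete]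
    (hreg : InnerRegularM μ)
    (f : I → T → X → EReal) (hf : UniformLusinFamily μ f) :
    LusinIntegrand μ (fun t x => ⨅ i : I, f i t x) := by
  intro ε hε A hA hμA
  obtain ⟨B, hBA, hBc, hBμ, hlsc⟩ := hf ε hε A hA hμA
  refine ⟨B, hBA, hBc, hBμ, ?_⟩
  rintro t ht V hV ⟨⟨x, α⟩, hmem, hxV⟩
  have hmem' : {β : ℝ | (x, β) ∈ V} ∈ 𝓝 α :=
    (hV.preimage (Continuous.prodMk_right x)).mem_nhds hxV
  have hmem'' : {β : ℝ | (x, β) ∈ V} ∈ 𝓝[>] α := nhdsWithin_le_nhds hmem'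
  obtain ⟨β, hβV, hαβ⟩ :=
    (Filter.eventually_and.mpr ⟨hmem'', self_mem_nhdsWithin⟩).exists
  have hinf : (⨅ i : I, f i t x) < (β : EReal) :=
    lt_of_le_of_lt hmem (by exact_mod_cast hαβ)
  obtain ⟨i, hi⟩ := iInf_lt_iff.mp hinf
  have hne : (epi (f i t) ∩ V).Nonempty := ⟨(x, β), le_of_lt hi, hβV⟩
  filter_upwards [hlsc i t ht V hV hne] with s hs
  obtain ⟨p, hp, hpV⟩ := hs
  refine ⟨p, ?_, hpV⟩
  exact le_trans (iInf_le (fun j => f j s p.1) i) hp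
end

section
/- Let F : T × X ⇒ Y be a Scorza-Dragoni set-valued map and f : T × X × Y → ℝ a Scorza-Dragoni function. Then the value function v_t(x) := inf{f(t,x,y) : y ∈ F(t,x)} is a Lusin integrand. Moreover, if F has locally compact values, then u_t(x) := sup{f(t,x,y) : y ∈ F(t,x)} is a Lusin integrand. -/
open MeasureTheory Topology Filter Set Pointwise
open scoped ENNReal NNReal

/-- A Scorza-Dragoni set-valued map with values in `Y`. -/
def ScorzaDragoniMap {T X Y : Type*} [TopologicalSpace T] [MeasurableSpace T]
    [TopologicalSpace X] [TopologicalSpace Y]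
    (μ : MeasureTheory.Measure T) (F : T → X → Set Y) : Prop :=
  ∀ ε : ℝ≥0∞, 0 < ε → ∀ A : Set T, MeasurableSet A → μ A < ⊤ →
    ∃ B ⊆ A, IsCompact B ∧ μ (A \ B) < ε ∧
      LscOn (B ×ˢ (Set.univ : Set X)) (fun p : T × X => F p.1 p.2) ∧
      IsClosed {p : T × X × Y | p.1 ∈ B ∧ p.2.2 ∈ F p.1 p.2.1}

/-- A Scorza-Dragoni function of three variables. -/
def ScorzaDragoniFun3 {T X Y : Type*} [TopologicalSpace T] [MeasurableSpace T]
    [TopologicalSpace X] [TopologicalSpace Y]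
    (μ : MeasureTheory.Measure T) (f : T → X → Y → ℝ) : Prop :=
  ∀ ε : ℝ≥0∞, 0 < ε → ∀ A : Set T, MeasurableSet A → μ A < ⊤ →
    ∃ B ⊆ A, IsCompact B ∧ μ (A \ B) < ε ∧
      ContinuousOn (fun p : T × X × Y => f p.1 p.2.1 p.2.2)
        (B ×ˢ (Set.univ : Set (X × Y)))


section Aux

open Filter

private lemma pair_mapClusterPt {α A B : Type*} [TopologicalSpace A] [TopologicalSpace B]
    {l : Filter α} {g : α → B} {a : A} {b : B} {u : α → A}
    (hu : Filter.Tendsto u l (nhds a)) (hg : MapClusterPt b l g) :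
    MapClusterPt (a, b) l (fun s => (u s, g s)) := by
  have hle : Filter.map (fun s => (u s, g s)) l ≤ Filter.comap Prod.fst (nhds a) := by
    rw [Filter.map_le_iff_le_comap, Filter.comap_comap]
    exact Filter.tendsto_iff_comap.mp hu
  have hmap : Filter.map Prod.snd
      (Filter.comap Prod.snd (nhds b) ⊓ Filter.map (fun s => (u s, g s)) l)
      = nhds b ⊓ Filter.map g l := by
    rw [Filter.push_pull', Filter.map_map]
    rfl
  have hne : Filter.NeBot
      (Filter.comap Prod.snd (nhds b) ⊓ Filter.map (fun s => (u s, g s)) l) := by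
    rw [← Filter.map_neBot_iff Prod.snd, hmap]
    exact hg
  have heq : nhds ((a, b) : A × B) ⊓ Filter.map (fun s => (u s, g s)) l
      = Filter.comap Prod.snd (nhds b) ⊓ Filter.map (fun s => (u s, g s)) l := by
    rw [nhds_prod_eq, Filter.prod_eq_inf, inf_assoc]
    exact inf_eq_right.mpr (le_trans inf_le_right hle)
  show (nhds ((a, b) : A × B) ⊓ Filter.map (fun s => (u s, g s)) l).NeBot
  rw [heq]
  exact hne

end Aux

/-- the value function of a Scorza-Dragoni map and function is a Lusin
integrand; if moreover the map has locally compact values, the sup-value function is a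
Lusin integrand as well. -/
theorem stmt14 {T X Y : Type*} [MetricSpace T] [MeasurableSpace T]
    [NormedAddCommGroup X] [NormedSpace ℝ X] [CompleteSpace X]
    [TopologicalSpace Y]
    (μ : MeasureTheory.Measure T) [MeasureTheory.SigmaFinite μ] [μ.IsComplete]
    (hreg : InnerRegularM μ)
    (F : T → X → Set Y) (f : T → X → Y → ℝ)
    (hF : ScorzaDragoniMap μ F) (hf : ScorzaDragoniFun3 μ f) :
    LusinIntegrand μ (fun t x => ⨅ y ∈ F t x, (f t x y : EReal)) ∧
    ((∀ p : T × X, ∃ U ∈ nhds p, IsCompact (closure (⋃ q ∈ U, F q.1 q.2))) →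
      LusinIntegrand μ (fun t x => ⨆ y ∈ F t x, (f t x y : EReal))) := by
  classical
  have common : ∀ ε : ℝ≥0∞, 0 < ε → ∀ A : Set T, MeasurableSet A → μ A < ⊤ →
      ∃ B ⊆ A, IsCompact B ∧ μ (A \ B) < ε ∧
        ∃ B₁ B₂ : Set T, B ⊆ B₁ ∧ B ⊆ B₂ ∧
          LscOn (B₁ ×ˢ (Set.univ : Set X)) (fun p : T × X => F p.1 p.2) ∧
          IsClosed {p : T × X × Y | p.1 ∈ B₁ ∧ p.2.2 ∈ F p.1 p.2.1} ∧
          ContinuousOn (fun p : T × X × Y => f p.1 p.2.1 p.2.2)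
            (B₂ ×ˢ (Set.univ : Set (X × Y))) ∧
          IsClosed B := by
    intro ε hε A hA hAfin
    set δ := min (ε / 2) 1 with hδ
    have hδpos : 0 < δ := lt_min (ENNReal.half_pos hε.ne') zero_lt_one
    obtain ⟨B₁, hB₁A, hB₁c, hB₁μ, hlsc, hcg⟩ := hF δ hδpos A hA hAfin
    obtain ⟨B₂, hB₂A, hB₂c, hB₂μ, hcont⟩ := hf δ hδpos A hA hAfin
    refine ⟨B₁ ∩ B₂, fun s hs => hB₁A hs.1, hB₁c.inter_right hB₂c.isClosed, ?_,
      B₁, B₂, Set.inter_subset_left, Set.inter_subset_right, hlsc, hcg, hcont,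
      (hB₁c.inter_right hB₂c.isClosed).isClosed⟩
    calc μ (A \ (B₁ ∩ B₂)) ≤ μ ((A \ B₁) ∪ (A \ B₂)) := measure_mono (by rw [Set.diff_inter])
      _ ≤ μ (A \ B₁) + μ (A \ B₂) := measure_union_le _ _
      _ < δ + δ := ENNReal.add_lt_add hB₁μ hB₂μ
      _ ≤ ε / 2 + ε / 2 := add_le_add (min_le_left _ _) (min_le_left _ _)
      _ = ε := ENNReal.add_halves ε
  constructor
  · -- inf part
    intro ε hε A hA hAfin
    obtain ⟨B, hBA, hBc, hBμ, B₁, B₂, hsub1, hsub2, hlsc, hcg, hcont, hBcl⟩ :=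
      common ε hε A hA hAfin
    refine ⟨B, hBA, hBc, hBμ, ?_⟩
    rintro t htB V hV ⟨⟨x, r⟩, hepi, hxrV⟩
    obtain ⟨Wx, Wr, hWxo, hxWx, hWro, hrWr, hWsub⟩ := mem_nhds_prod_iff'.mp (hV.mem_nhds hxrV)
    obtain ⟨ε₀, hε₀, hball⟩ := Metric.isOpen_iff.mp hWro r hrWr
    have hepi' : (⨅ y ∈ F t x, (f t x y : EReal)) ≤ ((r : ℝ) : EReal) := hepi
    have hlt : (⨅ y ∈ F t x, (f t x y : EReal)) < ((r + ε₀ / 2 : ℝ) : EReal) :=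
      hepi'.trans_lt (by exact_mod_cast (by linarith : r < r + ε₀ / 2))
    rw [iInf_lt_iff] at hlt
    obtain ⟨y, hy⟩ := hlt
    rw [iInf_lt_iff] at hy
    obtain ⟨hyF, hylt⟩ := hy
    have hfr : f t x y < r + ε₀ / 2 := by exact_mod_cast hylt
    have hcw : ContinuousWithinAt (fun p : T × X × Y => f p.1 p.2.1 p.2.2)
        (B₂ ×ˢ (Set.univ : Set (X × Y))) (t, (x, y)) := hcont _ ⟨hsub2 htB, trivial⟩
    have hevf : (fun p : T × X × Y => f p.1 p.2.1 p.2.2) ⁻¹' (Set.Iio (r + ε₀ / 2)) ∈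
        𝓝[B₂ ×ˢ (Set.univ : Set (X × Y))] (t, (x, y)) := hcw (isOpen_Iio.mem_nhds hfr)
    obtain ⟨O, hOo, hpO, hOsub⟩ := mem_nhdsWithin.mp hevf
    obtain ⟨UT, UXY, hUTo, htUT, hUXYo, hxyUXY, hUsub⟩ := mem_nhds_prod_iff'.mp (hOo.mem_nhds hpO)
    obtain ⟨UX, UY, hUXo, hxUX, hUYo, hyUY, hUXYsub⟩ :=
      mem_nhds_prod_iff'.mp (hUXYo.mem_nhds hxyUXY)
    have hFx : (F t x ∩ UY).Nonempty := ⟨y, hyF, hyUY⟩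
    have hevF := hlsc (t, x) ⟨hsub1 htB, trivial⟩ UY hUYo hFx
    have htend : Filter.Tendsto (fun s => ((s, x) : T × X)) (𝓝[B] t)
        (𝓝[B₁ ×ˢ (Set.univ : Set X)] (t, x)) := by
      rw [tendsto_nhdsWithin_iff]
      refine ⟨((continuous_id.prodMk continuous_const).tendsto t).mono_left
        nhdsWithin_le_nhds, ?_⟩
      exact eventually_mem_nhdsWithin.mono fun s hs => ⟨hsub1 hs, trivial⟩
    have hev1 : ∀ᶠ s in 𝓝[B] t, (F s x ∩ UY).Nonempty := htend.eventually hevF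
    have hev2 : ∀ᶠ s in 𝓝[B] t, s ∈ UT :=
      (Filter.eventually_of_mem (hUTo.mem_nhds htUT) fun s hs => hs).filter_mono
        nhdsWithin_le_nhds
    filter_upwards [hev1, hev2, eventually_mem_nhdsWithin] with s hsF hsUT hsB
    obtain ⟨y', hy'F, hy'UY⟩ := hsF
    have hfs : f s x y' < r + ε₀ / 2 := by
      have hin : ((s, (x, y')) : T × X × Y) ∈ O ∩ B₂ ×ˢ (Set.univ : Set (X × Y)) :=
        ⟨hUsub ⟨hsUT, hUXYsub ⟨hxUX, hy'UY⟩⟩, ⟨hsub2 hsB, trivial⟩⟩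
      exact hOsub hin
    refine ⟨(x, max r (f s x y')), ?_, ?_⟩
    · show (⨅ y ∈ F s x, (f s x y : EReal)) ≤ ((max r (f s x y') : ℝ) : EReal)
      refine le_trans (iInf₂_le y' hy'F) ?_
      exact_mod_cast le_max_right _ _
    · refine hWsub ⟨hxWx, hball ?_⟩
      rw [Metric.mem_ball, Real.dist_eq, abs_sub_lt_iff]
      have h1 : r ≤ max r (f s x y') := le_max_left _ _
      have h2 : max r (f s x y') < r + ε₀ := max_lt (by linarith) (by linarith)
      constructor <;> linarith
  · -- sup part
    intro hloc ε hε A hA hAfin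
    obtain ⟨B, hBA, hBc, hBμ, B₁, B₂, hsub1, hsub2, hlsc, hcg, hcont, hBcl⟩ :=
      common ε hε A hA hAfin
    refine ⟨B, hBA, hBc, hBμ, ?_⟩
    rintro t htB V hV ⟨⟨x, r⟩, hepi, hxrV⟩
    obtain ⟨Wx, Wr, hWxo, hxWx, hWro, hrWr, hWsub⟩ := mem_nhds_prod_iff'.mp (hV.mem_nhds hxrV)
    obtain ⟨ε₀, hε₀, hball⟩ := Metric.isOpen_iff.mp hWro r hrWr
    set c := r + ε₀ / 2 with hc
    have hepi' : (⨆ y ∈ F t x, (f t x y : EReal)) ≤ ((r : ℝ) : EReal) := hepi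
    obtain ⟨U, hU, hK⟩ := hloc (t, x)
    obtain ⟨UT, UX, hUTo, htUT, hUXo, hxUX, hUsub⟩ := mem_nhds_prod_iff'.mp hU
    have hg : Continuous (fun q : T × Y => ((q.1, (x, q.2)) : T × X × Y)) :=
      continuous_fst.prodMk (continuous_const.prodMk continuous_snd)
    have hC2 : IsClosed ((B ×ˢ (Set.univ : Set (X × Y))) ∩
        (fun p : T × X × Y => f p.1 p.2.1 p.2.2) ⁻¹' (Set.Ici c)) := by
      refine ContinuousOn.preimage_isClosed_of_isClosed ?_ (hBcl.prod isClosed_univ) isClosed_Ici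
      exact hcont.mono fun p hp => ⟨hsub2 hp.1, trivial⟩
    have hCclosed : IsClosed
        (((fun q : T × Y => ((q.1, (x, q.2)) : T × X × Y)) ⁻¹'
            {p : T × X × Y | p.1 ∈ B₁ ∧ p.2.2 ∈ F p.1 p.2.1}) ∩
          ((fun q : T × Y => ((q.1, (x, q.2)) : T × X × Y)) ⁻¹'
            ((B ×ˢ (Set.univ : Set (X × Y))) ∩
              (fun p : T × X × Y => f p.1 p.2.1 p.2.2) ⁻¹' (Set.Ici c)))) :=
      (hcg.preimage hg).inter (hC2.preimage hg)
    set Cset : Set (T × Y) :=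
      ((fun q : T × Y => ((q.1, (x, q.2)) : T × X × Y)) ⁻¹'
          {p : T × X × Y | p.1 ∈ B₁ ∧ p.2.2 ∈ F p.1 p.2.1}) ∩
        ((fun q : T × Y => ((q.1, (x, q.2)) : T × X × Y)) ⁻¹'
          ((B ×ˢ (Set.univ : Set (X × Y))) ∩
            (fun p : T × X × Y => f p.1 p.2.1 p.2.2) ⁻¹' (Set.Ici c))) with hCdef
    have hclaim : ∀ᶠ s in 𝓝[B] t, ∀ y ∈ F s x, f s x y < c := by
      by_contra hcon
      rw [Filter.not_eventually] at hcon
      have hfreq : ∃ᶠ s in 𝓝[B] t, s ∈ {s : T | ∃ y, y ∈ F s x ∧ c ≤ f s x y} := by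
        refine hcon.mono fun s hs => ?_
        push_neg at hs
        obtain ⟨y, hy1, hy2⟩ := hs
        exact ⟨y, hy1, hy2⟩
      obtain ⟨s₀, y₀, hy₀⟩ := hfreq.exists
      haveI : Nonempty Y := ⟨y₀⟩
      set Ω : Set T := {s : T | ∃ y, y ∈ F s x ∧ c ≤ f s x y} with hΩ
      have hne : Filter.NeBot ((𝓝[B] t) ⊓ Filter.principal Ω) :=
        Filter.frequently_iff_neBot.mp hfreq
      set l := (𝓝[B] t) ⊓ Filter.principal Ω with hl
      haveI : Filter.NeBot l := hne
      let yfun : T → Y := fun s =>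
        if h : ∃ y, y ∈ F s x ∧ c ≤ f s x y then h.choose else Classical.arbitrary Y
      have hyfun : ∀ s ∈ Ω, yfun s ∈ F s x ∧ c ≤ f s x (yfun s) := by
        intro s hs
        have hs' : ∃ y, y ∈ F s x ∧ c ≤ f s x y := hs
        simp only [yfun]
        rw [dif_pos hs']
        exact hs'.choose_spec
      have hl_nhds : l ≤ 𝓝 t := le_trans inf_le_left nhdsWithin_le_nhds
      have hlB : ∀ᶠ s in l, s ∈ B :=
        eventually_mem_nhdsWithin.filter_mono inf_le_left
      have hlΩ : ∀ᶠ s in l, s ∈ Ω := Filter.le_principal_iff.mp inf_le_right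
      have hlUT : ∀ᶠ s in l, s ∈ UT :=
        (Filter.eventually_of_mem (hUTo.mem_nhds htUT) fun s hs => hs).filter_mono hl_nhds
      have hKmem : ∀ᶠ s in l, yfun s ∈ closure (⋃ q ∈ U, F q.1 q.2) := by
        filter_upwards [hlΩ, hlUT] with s hsΩ hsUT
        have h1 : yfun s ∈ F s x := (hyfun s hsΩ).1
        exact subset_closure (Set.mem_iUnion₂.mpr ⟨((s, x) : T × X), hUsub ⟨hsUT, hxUX⟩, h1⟩)
      obtain ⟨ystar, hyK, hycl⟩ := hK.exists_mapClusterPt (Filter.le_principal_iff.mpr (Filter.mem_map.mpr hKmem))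
      have hpair : MapClusterPt ((t, ystar) : T × Y) l (fun s => (s, yfun s)) :=
        pair_mapClusterPt (Filter.tendsto_id.mono_right hl_nhds) hycl
      have hev : ∀ᶠ s in l, (s, yfun s) ∈ Cset := by
        filter_upwards [hlΩ, hlB] with s hsΩ hsB
        exact ⟨⟨hsub1 hsB, (hyfun s hsΩ).1⟩, ⟨⟨hsB, trivial⟩, (hyfun s hsΩ).2⟩⟩
      have hmemC : ((t, ystar) : T × Y) ∈ Cset := by
        have h1 : ClusterPt ((t, ystar) : T × Y) (Filter.principal Cset) :=
          ClusterPt.mono hpair (Filter.le_principal_iff.mpr (Filter.mem_map.mpr hev))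
        rw [← hCclosed.closure_eq]
        exact mem_closure_iff_clusterPt.mpr h1
      obtain ⟨⟨_, hyF⟩, ⟨_, hcf⟩⟩ := hmemC
      have hyF' : ystar ∈ F t x := hyF
      have hle : ((f t x ystar : ℝ) : EReal) ≤ (⨆ y ∈ F t x, (f t x y : EReal)) :=
        le_iSup₂ (f := fun y (_ : y ∈ F t x) => ((f t x y : ℝ) : EReal)) ystar hyF'
      have h2 : ((c : ℝ) : EReal) ≤ ((r : ℝ) : EReal) :=
        le_trans (by exact_mod_cast hcf) (le_trans hle hepi')
      have h3 : c ≤ r := by exact_mod_cast h2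
      rw [hc] at h3
      linarith
    filter_upwards [hclaim] with s hs
    refine ⟨(x, c), ?_, hWsub ⟨hxWx, hball ?_⟩⟩
    · show (⨆ y ∈ F s x, (f s x y : EReal)) ≤ ((c : ℝ) : EReal)
      exact iSup₂_le fun y hy => le_of_lt (by exact_mod_cast hs y hy)
    · rw [Metric.mem_ball, Real.dist_eq, hc]
      have : r + ε₀ / 2 - r = ε₀ / 2 := by ring
      rw [this, abs_of_nonneg (by linarith)]
      linarith
end

section
/- Let f : T × X → ℝ∪{±∞} be an admissible integrand on a complete σ-finite inner regular measure space and A ∈ 𝒜. If α : A → ℝ∪{±∞} is measurable with m_f(t) := inf_{x∈X} f_t(x) < α(t) for all t ∈ A, then there exists a strongly measurable function x : A → X such that f_t(x(t)) ≤ α(t) for μ-a.e. t ∈ A. -/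
/-!
For rational `q` the strict sublevel sets `Φ_q t = {y | ⨅ i, f^i_t y < q}` depend lower
semicontinuously on `t` on each set of a countable family that covers `T` up to a null set (the
uniform Lusin property plus σ-finiteness), and `closure (Φ_q t) ⊆ {f_t ≤ q}` because `epi f_t` is
the closure of `epi (⨅ i, f^i_t)`. So it suffices to select from `closure Φ` on a set of finite
measure where `Φ` is lower semicontinuous with nonempty values, and to glue these selections over
the countably many pieces `{Φ_q t ≠ ∅, q < α t}`.

The selection does not use separability of `X`. The sets `{t | Φ t ∩ V ≠ ∅}`, `V` open, are
relatively open, so by inner regularity (finite subcovers of compact sets) each such cover has a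
countable subcover up to a null set. Refining fibre by fibre gives countably-valued measurable maps
`u n` with `Φ t ∩ ball (u n t) 2⁻ⁿ ≠ ∅` and `dist (u (n+1) t) (u n t) < 2⁻ⁿ` almost everywhere;
their limit lies in `closure (Φ t)`.
-/

open MeasureTheory Topology Filter Set Pointwise
open scoped ENNReal NNReal

open MeasureTheory Topology Filter Set Metric

section Epigraph

variable {T X : Type*}

theorem LscOn.mono [TopologicalSpace T] [TopologicalSpace X] {B B' : Set T} {Φ : T → Set X}
    (h : LscOn B Φ) (hB' : B' ⊆ B) : LscOn B' Φ :=
  fun t ht V hV hne => (h t (hB' ht) V hV hne).filter_mono (nhdsWithin_mono t hB')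

theorem LscOn.exists_isOpen_inter_eq [TopologicalSpace T] [TopologicalSpace X] {B : Set T}
    {Φ : T → Set X} (h : LscOn B Φ) {V : Set X} (hV : IsOpen V) :
    ∃ W : Set T, IsOpen W ∧ B ∩ W = {t ∈ B | (Φ t ∩ V).Nonempty} := by
  have hloc : ∀ t ∈ {t ∈ B | (Φ t ∩ V).Nonempty}, ∃ U : Set T, IsOpen U ∧ t ∈ U ∧
      U ∩ B ⊆ {t ∈ B | (Φ t ∩ V).Nonempty} := by
    intro t ⟨htB, hne⟩
    obtain ⟨U, hUsub, hUo, htU⟩ :=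
      eventually_nhds_iff.1 (eventually_nhdsWithin_iff.1 (h t htB V hV hne))
    exact ⟨U, hUo, htU, fun s ⟨hsU, hsB⟩ => ⟨hsB, hUsub s hsU hsB⟩⟩
  choose! U hUo htU hUsub using hloc
  refine ⟨⋃ t ∈ {t ∈ B | (Φ t ∩ V).Nonempty}, U t, isOpen_biUnion hUo, ?_⟩
  refine Subset.antisymm (fun s ⟨hsB, hsW⟩ => ?_) fun t ht => ⟨ht.1, mem_biUnion ht (htU t ht)⟩
  obtain ⟨t, ht, hsU⟩ := mem_iUnion₂.1 hsW
  exact hUsub t ht ⟨hsU, hsB⟩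

theorem LscOn.setOf_iInf_lt [TopologicalSpace T] [TopologicalSpace X] {ι : Type*} {B : Set T}
    {g : ι → T → X → EReal} (h : ∀ i, LscOn B fun t => epi (g i t)) (q : ℝ) :
    LscOn B fun t => {y | ⨅ i, g i t y < q} := by
  intro t ht V hV ⟨y, hyq, hyV⟩
  have hyq' : ⨅ i, g i t y < (q : EReal) := hyq
  obtain ⟨i, hi⟩ := iInf_lt_iff.1 hyq'
  obtain ⟨r, hyr, hrq⟩ := EReal.lt_iff_exists_real_btwn.1 hi
  refine (h i t ht (V ×ˢ Iio q) (hV.prod isOpen_Iio)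
    ⟨(y, r), hyr.le, hyV, EReal.coe_lt_coe_iff.1 hrq⟩).mono ?_
  rintro s ⟨p, hp, hpV, hpq⟩
  exact ⟨p.1, (iInf_le _ i).trans_lt (hp.trans_lt (EReal.coe_lt_coe_iff.2 hpq)), hpV⟩

theorem closure_setOf_lt_subset_of_epi_eq_closure [TopologicalSpace X] {g h : X → EReal}
    (hepi : epi h = closure (epi g)) (q : ℝ) : closure {y | g y < q} ⊆ {y | h y ≤ q} := by
  intro y hy
  have hmem : (y, q) ∈ closure ({y | g y < q} ×ˢ {q}) := by
    rw [closure_prod_eq, closure_singleton]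
    exact ⟨hy, rfl⟩
  refine (hepi ▸ closure_mono ?_ hmem : (y, q) ∈ epi h)
  rintro p ⟨hp, rfl⟩
  exact le_of_lt (show g p.1 < p.2 from hp)

theorem iInf_lt_of_epi_eq_closure [TopologicalSpace X] {g h : X → EReal}
    (hepi : epi h = closure (epi g)) {q : ℝ} (hq : ⨅ y, h y < q) : ⨅ y, g y < q := by
  obtain ⟨y, hy⟩ := iInf_lt_iff.1 hq
  obtain ⟨r, hyr, hrq⟩ := EReal.lt_iff_exists_real_btwn.1 hy
  have hmem : (y, r) ∈ closure (epi g) := hepi ▸ hyr.le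
  obtain ⟨p, ⟨-, hpq⟩, hp⟩ := mem_closure_iff.1 hmem _ (isOpen_univ.prod isOpen_Iio)
    ⟨trivial, EReal.coe_lt_coe_iff.1 hrq⟩
  exact (iInf_le g p.1).trans_lt (lt_of_le_of_lt hp (EReal.coe_lt_coe_iff.2 hpq))

end Epigraph

theorem ENNReal.eq_zero_of_forall_lt_inv_nat {a : ℝ≥0∞} (h : ∀ n : ℕ, a < (n : ℝ≥0∞)⁻¹) :
    a = 0 := by
  by_contra ha
  obtain ⟨n, hn⟩ := ENNReal.exists_inv_nat_lt ha
  exact lt_asymm hn (h n)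

section Measurability

variable {T X : Type*} [MeasurableSpace T]

def IsCountablySimple (u : T → X) : Prop :=
  (range u).Countable ∧ ∀ x, MeasurableSet (u ⁻¹' {x})

theorem IsCountablySimple.measurableSet_preimage {u : T → X} (hu : IsCountablySimple u)
    (s : Set X) : MeasurableSet (u ⁻¹' s) := by
  rw [← preimage_inter_range, ← biUnion_preimage_singleton]
  exact .biUnion (hu.1.mono inter_subset_right) fun x _ => hu.2 x

theorem IsCountablySimple.stronglyMeasurable [TopologicalSpace X]
    [TopologicalSpace.PseudoMetrizableSpace X] {u : T → X} (hu : IsCountablySimple u) :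
    StronglyMeasurable u := by
  borelize X
  exact stronglyMeasurable_iff_measurable_separable.2
    ⟨fun s _ => hu.measurableSet_preimage s, hu.1.isSeparable⟩

theorem Measurable.isCountablySimple_comp {idx : T → ℕ} (hidx : Measurable idx) (e : ℕ → X) :
    IsCountablySimple (e ∘ idx) :=
  ⟨(countable_range e).mono (range_comp_subset_range idx e),
    fun x => hidx (MeasurableSet.of_discrete (s := e ⁻¹' {x}))⟩

theorem IsCountablySimple.bind {u : T → X} (hu : IsCountablySimple u) {v : X → T → X}
    (hv : ∀ c, IsCountablySimple (v c)) : IsCountablySimple fun t => v (u t) t := by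
  refine ⟨(hu.1.biUnion fun c _ => (hv c).1).mono ?_, fun x => ?_⟩
  · rintro _ ⟨t, rfl⟩
    exact mem_biUnion (mem_range_self t) (mem_range_self t)
  · have hfib : (fun t => v (u t) t) ⁻¹' {x} = ⋃ c ∈ range u, u ⁻¹' {c} ∩ v c ⁻¹' {x} := by
      ext t
      refine ⟨fun h => mem_biUnion (mem_range_self t) ⟨rfl, h⟩, fun h => ?_⟩
      obtain ⟨c, -, htc, htx⟩ := mem_iUnion₂.1 h
      rwa [mem_preimage, mem_singleton_iff.1 htc]
    rw [hfib]
    exact .biUnion hu.1 fun c _ => (hu.2 c).inter ((hv c).2 x)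

theorem exists_measurable_nat_mem_of_mem_iUnion {W : ℕ → Set T}
    (hW : ∀ n, MeasurableSet (W n)) :
    ∃ idx : T → ℕ, Measurable idx ∧ ∀ t ∈ ⋃ n, W n, t ∈ W (idx t) := by
  classical
  have hex : ∀ t, ∃ n, t ∈ W n ∨ t ∉ ⋃ m, W m := fun t => by
    by_cases ht : t ∈ ⋃ m, W m
    · obtain ⟨n, hn⟩ := mem_iUnion.1 ht
      exact ⟨n, .inl hn⟩
    · exact ⟨0, .inr ht⟩
  exact ⟨fun t => Nat.find (hex t),
    measurable_find hex fun n => (hW n).union (MeasurableSet.iUnion hW).compl,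
    fun t ht => (Nat.find_spec (hex t)).resolve_right (not_not.2 ht)⟩

theorem stronglyMeasurable_of_measurable_index [TopologicalSpace X]
    [TopologicalSpace.PseudoMetrizableSpace X] {u : ℕ → T → X}
    (hu : ∀ n, StronglyMeasurable (u n)) {idx : T → ℕ} (hidx : Measurable idx) :
    StronglyMeasurable fun t => u (idx t) t := by
  borelize X
  refine stronglyMeasurable_iff_measurable_separable.2 ⟨?_, ?_⟩
  · exact (measurable_from_prod_countable_left (f := fun p : T × ℕ => u p.2 p.1)
      fun n => (hu n).measurable).comp (measurable_id.prodMk hidx)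
  refine (TopologicalSpace.IsSeparable.iUnion fun n => (hu n).isSeparable_range).mono ?_
  rintro _ ⟨t, rfl⟩
  exact mem_iUnion.2 ⟨idx t, t, rfl⟩

theorem exists_stronglyMeasurable_ae_restrict_iUnion [TopologicalSpace X]
    [TopologicalSpace.PseudoMetrizableSpace X] {μ : Measure T} {ι : Type*} [Countable ι]
    [Nonempty ι] {E : ι → Set T} (hE : ∀ i, MeasurableSet (E i)) {u : ι → T → X}
    (hu : ∀ i, StronglyMeasurable (u i)) {p : T → X → Prop}
    (hp : ∀ i, ∀ᵐ t ∂μ.restrict (E i), p t (u i t)) :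
    ∃ x : T → X, StronglyMeasurable x ∧ ∀ᵐ t ∂μ.restrict (⋃ i, E i), p t (x t) := by
  obtain ⟨e, he⟩ := exists_surjective_nat ι
  obtain ⟨idx, hidx, hmem⟩ := exists_measurable_nat_mem_of_mem_iUnion fun n => hE (e n)
  refine ⟨fun t => u (e (idx t)) t, stronglyMeasurable_of_measurable_index (fun n => hu (e n)) hidx,
    (ae_restrict_iff' (MeasurableSet.iUnion hE)).2 ?_⟩
  filter_upwards [ae_all_iff.2 fun n => (ae_restrict_iff' (hE (e n))).1 (hp (e n))] with t ht htE
  refine ht _ (hmem t ?_)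
  obtain ⟨i, hi⟩ := mem_iUnion.1 htE
  obtain ⟨n, rfl⟩ := he i
  exact mem_iUnion.2 ⟨n, hi⟩

end Measurability

section Covering

variable {T : Type*} [MeasurableSpace T] {μ : Measure T}

theorem exists_seq_measurableSet_ae_cover [SigmaFinite μ] {P : Set T → Prop}
    (hP : ∀ ⦃s s'⦄, s ⊆ s' → P s' → P s)
    (h : ∀ ε : ℝ≥0∞, 0 < ε → ∀ A, MeasurableSet A → μ A < ⊤ → ∃ B ⊆ A, μ (A \ B) < ε ∧ P B) :
    ∃ M : ℕ → Set T, (∀ n, MeasurableSet (M n) ∧ μ (M n) < ⊤ ∧ P (M n)) ∧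
      ∀ᵐ t ∂μ, ∃ n, t ∈ M n := by
  have hS : ∀ m k : ℕ, ∃ M ⊆ spanningSets μ m, MeasurableSet M ∧
      μ (spanningSets μ m \ M) < (k : ℝ≥0∞)⁻¹ ∧ P M := by
    intro m k
    set S := spanningSets μ m
    have hSm : MeasurableSet S := measurableSet_spanningSets μ m
    obtain ⟨B, hBS, hB, hPB⟩ :=
      h _ (ENNReal.inv_pos.2 (ENNReal.natCast_ne_top k)) S hSm (measure_spanningSets_lt_top μ m)
    -- `B` is only compact, so possibly not measurable.
    refine ⟨S \ toMeasurable μ (S \ B), sdiff_subset, hSm.diff (measurableSet_toMeasurable _ _),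
      ?_, hP (fun t ht => ?_) hPB⟩
    · calc μ (S \ (S \ toMeasurable μ (S \ B))) ≤ μ (toMeasurable μ (S \ B)) := by
            rw [sdiff_sdiff_right_self]
            exact measure_mono inter_subset_right
        _ = μ (S \ B) := measure_toMeasurable _
        _ < _ := hB
    · by_contra htB
      exact ht.2 (subset_toMeasurable _ _ ⟨ht.1, htB⟩)
  choose M hMS hMm hMε hMP using hS
  have hnull : ∀ m, μ (spanningSets μ m \ ⋃ k, M m k) = 0 := fun m =>
    ENNReal.eq_zero_of_forall_lt_inv_nat fun k =>
      (measure_mono (sdiff_subset_sdiff_right (subset_iUnion _ k))).trans_lt (hMε m k)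
  refine ⟨fun n => M n.unpair.1 n.unpair.2, fun n => ⟨hMm _ _,
    (measure_mono (hMS _ _)).trans_lt (measure_spanningSets_lt_top μ _), hMP _ _⟩, ?_⟩
  filter_upwards [ae_all_iff.2 fun m => measure_eq_zero_iff_ae_notMem.1 (hnull m)] with t ht
  obtain ⟨m, hm⟩ := mem_iUnion.1 ((iUnion_spanningSets μ).symm ▸ mem_univ t)
  obtain ⟨k, hk⟩ := mem_iUnion.1 (not_not.1 fun h => ht m ⟨hm, h⟩)
  exact ⟨Nat.pair m k, by simpa using hk⟩

theorem InnerRegularM.exists_seq_ae_mem [TopologicalSpace T] [OpensMeasurableSpace T]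
    (hreg : InnerRegularM μ) {F : Set T} (hF : MeasurableSet F) (hFfin : μ F < ⊤)
    {ι : Type*} {S : Set ι} (hS : S.Nonempty) {W : ι → Set T} (hW : ∀ i, IsOpen (W i))
    (hcov : ∀ᵐ t ∂μ.restrict F, ∃ i ∈ S, t ∈ W i) :
    ∃ e : ℕ → ι, (∀ n, e n ∈ S) ∧ ∀ᵐ t ∂μ.restrict F, ∃ n, t ∈ W (e n) := by
  set R := F ∩ ⋃ i ∈ S, W i
  have hR : MeasurableSet R := hF.inter (isOpen_biUnion fun i _ => hW i).measurableSet
  have hsubcover : ∀ k : ℕ, ∃ b ⊆ S, b.Finite ∧ μ (R \ ⋃ i ∈ b, W i) < (k : ℝ≥0∞)⁻¹ := by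
    intro k
    obtain ⟨K, hKR, hK, hRK⟩ := hreg _ (ENNReal.inv_pos.2 (ENNReal.natCast_ne_top k)) R hR
      ((measure_mono inter_subset_left).trans_lt hFfin)
    obtain ⟨b, hbS, hb, hKb⟩ :=
      hK.elim_finite_subcover_image (fun i _ => hW i) (hKR.trans inter_subset_right)
    exact ⟨b, hbS, hb, (measure_mono (sdiff_subset_sdiff_right hKb)).trans_lt hRK⟩
  choose b hbS hb hbR using hsubcover
  have hnull : μ (R \ ⋃ i ∈ ⋃ k, b k, W i) = 0 :=
    ENNReal.eq_zero_of_forall_lt_inv_nat fun k => (measure_mono (sdiff_subset_sdiff_right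
      (biUnion_subset_biUnion_left (subset_iUnion b k)))).trans_lt (hbR k)
  obtain ⟨i₀, hi₀⟩ := hS
  obtain ⟨e, he⟩ := ((countable_iUnion fun k => (hb k).countable).insert i₀).exists_eq_range
    (insert_nonempty _ _)
  refine ⟨e, fun n => ?_, ?_⟩
  · have hn : e n ∈ insert i₀ (⋃ k, b k) := he ▸ mem_range_self n
    rcases hn with hn | hn
    · exact hn ▸ hi₀
    · obtain ⟨k, hk⟩ := mem_iUnion.1 hn
      exact hbS k hk
  · filter_upwards [hcov, ae_restrict_mem hF,
      ae_restrict_of_ae (measure_eq_zero_iff_ae_notMem.1 hnull)] with t ⟨i, hiS, hti⟩ htF htR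
    obtain ⟨j, hj, htj⟩ := mem_iUnion₂.1 (not_not.1 fun h => htR ⟨⟨htF, mem_biUnion hiS hti⟩, h⟩)
    obtain ⟨n, hn⟩ : j ∈ range e := he ▸ mem_insert_of_mem i₀ hj
    exact ⟨n, hn ▸ htj⟩

end Covering

section Selection

variable {T X : Type*} [TopologicalSpace T] [MeasurableSpace T] [OpensMeasurableSpace T]
  {μ : Measure T} [PseudoMetricSpace X] {R : Set T} {Φ : T → Set X}

theorem LscOn.measurableSet_setOf_nonempty (hΦ : LscOn R Φ) (hR : MeasurableSet R) :
    MeasurableSet {t ∈ R | (Φ t).Nonempty} := by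
  obtain ⟨W, hWo, hW⟩ := hΦ.exists_isOpen_inter_eq isOpen_univ
  simp only [inter_univ] at hW
  exact hW ▸ hR.inter hWo.measurableSet

theorem LscOn.exists_isCountablySimple_refine (hΦ : LscOn R Φ) (hreg : InnerRegularM μ)
    (hR : MeasurableSet R) (hRfin : μ R < ⊤) {B : X → Set X} (hB : ∀ c, (B c).Nonempty)
    {u : T → X} (hu : IsCountablySimple u)
    (hΦB : ∀ᵐ t ∂μ.restrict R, (Φ t ∩ B (u t)).Nonempty) {s : ℝ} (hs : 0 < s) :
    ∃ u' : T → X, IsCountablySimple u' ∧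
      ∀ᵐ t ∂μ.restrict R, u' t ∈ B (u t) ∧ (Φ t ∩ ball (u' t) s).Nonempty := by
  choose O hOo hO using fun y => hΦ.exists_isOpen_inter_eq (isOpen_ball (x := y) (ε := s))
  have hOmem : ∀ t ∈ R, ∀ y, t ∈ O y ↔ (Φ t ∩ ball y s).Nonempty := fun t htR y => by
    simpa [htR] using Set.ext_iff.1 (hO y) t
  have hF : ∀ c, MeasurableSet (R ∩ u ⁻¹' {c}) := fun c => hR.inter (hu.2 c)
  have hcov : ∀ c, ∀ᵐ t ∂μ.restrict (R ∩ u ⁻¹' {c}), ∃ y ∈ B c, t ∈ O y := by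
    intro c
    filter_upwards [ae_restrict_of_ae_restrict_of_subset inter_subset_left hΦB,
      ae_restrict_mem (hF c)] with t ⟨y, hyΦ, hyB⟩ ⟨htR, htc⟩
    exact ⟨y, htc ▸ hyB, (hOmem t htR _).2 ⟨y, hyΦ, mem_ball_self hs⟩⟩
  choose e heB he using fun c => hreg.exists_seq_ae_mem (hF c)
    ((measure_mono inter_subset_left).trans_lt hRfin) (hB c) hOo (hcov c)
  choose idx hidx hidxO using fun c =>
    exists_measurable_nat_mem_of_mem_iUnion fun n => (hOo (e c n)).measurableSet
  refine ⟨fun t => e (u t) (idx (u t) t),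
    hu.bind fun c => (hidx c).isCountablySimple_comp (e c), ?_⟩
  have hRu : R = ⋃ c ∈ range u, R ∩ u ⁻¹' {c} := by
    ext t
    simp
  rw [hRu, ae_restrict_biUnion_iff _ hu.1]
  intro c _
  filter_upwards [he c, ae_restrict_mem (hF c)] with t ht ⟨htR, htc⟩
  obtain rfl : u t = c := htc
  exact ⟨heB _ _, (hOmem t htR _).1 (hidxO _ t (mem_iUnion.2 ht))⟩

theorem Filter.Tendsto.mem_closure_of_inter_ball_nonempty {s : Set X} {x : ℕ → X} {y : X}
    (hx : Tendsto x atTop (𝓝 y)) {r : ℕ → ℝ} (hr : Tendsto r atTop (𝓝 0))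
    (hs : ∀ n, (s ∩ ball (x n) (r n)).Nonempty) : y ∈ closure s := by
  choose z hzs hz using hs
  refine mem_closure_of_tendsto (hx.congr_dist ?_) (Eventually.of_forall hzs)
  exact squeeze_zero (fun n => dist_nonneg) (fun n => (dist_comm _ _).trans_le (hz n).le) hr

theorem LscOn.exists_stronglyMeasurable_ae_mem_closure [CompleteSpace X] [Nonempty X]
    (hΦ : LscOn R Φ) (hreg : InnerRegularM μ) (hR : MeasurableSet R) (hRfin : μ R < ⊤)
    (hne : ∀ t ∈ R, (Φ t).Nonempty) :
    ∃ u : T → X, StronglyMeasurable u ∧ ∀ᵐ t ∂μ.restrict R, u t ∈ closure (Φ t) := by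
  have hr : ∀ n : ℕ, 0 < (1 / 2 : ℝ) ^ n := fun n => by positivity
  obtain ⟨u₀, hu₀, hu₀R⟩ := hΦ.exists_isCountablySimple_refine hreg hR hRfin
    (B := fun _ => univ) (fun _ => univ_nonempty)
    ((measurable_const (a := 0)).isCountablySimple_comp fun _ => Classical.arbitrary X)
    (by filter_upwards [ae_restrict_mem hR] with t ht using by simpa using hne t ht) (hr 0)
  have hstep : ∀ n (u : T → X), IsCountablySimple u →
      (∀ᵐ t ∂μ.restrict R, (Φ t ∩ ball (u t) ((1 / 2) ^ n)).Nonempty) →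
      ∃ u' : T → X, IsCountablySimple u' ∧ ∀ᵐ t ∂μ.restrict R,
        u' t ∈ ball (u t) ((1 / 2) ^ n) ∧ (Φ t ∩ ball (u' t) ((1 / 2) ^ (n + 1))).Nonempty :=
    fun n _ hu hΦu => hΦ.exists_isCountablySimple_refine hreg hR hRfin
      (B := fun c => ball c ((1 / 2) ^ n)) (fun _ => nonempty_ball.2 (hr n)) hu hΦu (hr (n + 1))
  choose! next hnext hnextR using hstep
  obtain ⟨u, hu0, hsucc⟩ : ∃ u : ℕ → T → X, u 0 = u₀ ∧ ∀ n, u (n + 1) = next n (u n) :=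
    ⟨fun n => Nat.rec u₀ next n, rfl, fun n => rfl⟩
  have hu : ∀ n, IsCountablySimple (u n) ∧
      ∀ᵐ t ∂μ.restrict R, (Φ t ∩ ball (u n t) ((1 / 2) ^ n)).Nonempty := by
    intro n
    induction n with
    | zero => exact hu0 ▸ ⟨hu₀, hu₀R.mono fun t ht => ht.2⟩
    | succ n ih =>
      rw [hsucc]
      exact ⟨hnext n _ ih.1 ih.2, (hnextR n _ ih.1 ih.2).mono fun t ht => ht.2⟩
  have hae : ∀ᵐ t ∂μ.restrict R, ∀ n, dist (u n t) (u (n + 1) t) < (1 / 2) ^ n ∧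
      (Φ t ∩ ball (u n t) ((1 / 2) ^ n)).Nonempty := by
    refine ae_all_iff.2 fun n => ?_
    filter_upwards [hnextR n _ (hu n).1 (hu n).2, (hu n).2] with t ht hΦt
    rw [hsucc, dist_comm]
    exact ⟨ht.1, hΦt⟩
  have hlim : ∀ᵐ t ∂μ.restrict R,
      Tendsto (fun n => u n t) atTop (𝓝 (limUnder atTop fun n => u n t)) ∧
        limUnder atTop (fun n => u n t) ∈ closure (Φ t) := by
    filter_upwards [hae] with t ht
    have hcauchy : CauchySeq fun n => u n t := cauchySeq_of_le_geometric (1 / 2) 1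
      (by norm_num) fun n => (one_mul ((1 / 2 : ℝ) ^ n)).symm ▸ (ht n).1.le
    have htends := tendsto_nhds_limUnder (cauchySeq_tendsto_of_complete hcauchy)
    exact ⟨htends, htends.mem_closure_of_inter_ball_nonempty
      (tendsto_pow_atTop_nhds_zero_of_lt_one (by norm_num) (by norm_num)) fun n => (ht n).2⟩
  have hmeas : AEStronglyMeasurable (fun t => limUnder atTop fun n => u n t) (μ.restrict R) :=
    aestronglyMeasurable_of_tendsto_ae atTop
      (fun n => (hu n).1.stronglyMeasurable.aestronglyMeasurable) (hlim.mono fun t ht => ht.1)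
  refine ⟨hmeas.mk _, hmeas.stronglyMeasurable_mk, ?_⟩
  filter_upwards [hmeas.ae_eq_mk, hlim] with t heq ht
  exact heq ▸ ht.2

end Selection

theorem stmt15_general {T X : Type*} [TopologicalSpace T] [MeasurableSpace T]
    [OpensMeasurableSpace T]
    [NormedAddCommGroup X] [NormedSpace ℝ X] [CompleteSpace X]
    (μ : MeasureTheory.Measure T) [MeasureTheory.SigmaFinite μ]
    (hreg : InnerRegularM μ)
    (f : T → X → EReal) (hf : AdmissibleIntegrand μ f)
    (A : Set T) (hA : MeasurableSet A)
    (α : T → EReal) (hα : Measurable α)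
    (hlt : ∀ t ∈ A, (⨅ x : X, f t x) < α t) :
    ∃ x : T → X, MeasureTheory.StronglyMeasurable x ∧
      ∀ᵐ t ∂(μ.restrict A), f t (x t) ≤ α t := by
  obtain ⟨I, fi, hfi, -, hepi⟩ := hf
  obtain ⟨M, hM, hMcov⟩ := exists_seq_measurableSet_ae_cover
    (P := fun B => ∀ i, LscOn B fun t => epi (fi i t)) (fun _ _ hss' h i => (h i).mono hss')
    fun ε hε S hS hSfin =>
      (hfi ε hε S hS hSfin).imp fun B ⟨hBS, _, hB, hlsc⟩ => ⟨hBS, hB, hlsc⟩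
  set Φ : ℚ → T → Set X := fun q t => {y | ⨅ i, fi i t y < (q : ℝ)}
  have hΦ : ∀ n q, LscOn (M n) (Φ q) := fun n q => LscOn.setOf_iInf_lt (hM n).2.2 q
  set E : ℕ × ℚ → Set T := fun p =>
    {t ∈ M p.1 | (Φ p.2 t).Nonempty} ∩ α ⁻¹' Ioi ((p.2 : ℝ) : EReal)
  have hEM : ∀ p, E p ⊆ M p.1 := fun p t ht => ht.1.1
  have hE : ∀ p, MeasurableSet (E p) := fun p =>
    ((hΦ p.1 p.2).measurableSet_setOf_nonempty (hM p.1).1).inter (hα measurableSet_Ioi)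
  choose u hu hsel using fun p =>
    ((hΦ p.1 p.2).mono (hEM p)).exists_stronglyMeasurable_ae_mem_closure hreg (hE p)
      ((measure_mono (hEM p)).trans_lt (hM p.1).2.1) fun t ht => ht.1.2
  obtain ⟨x, hx, hxE⟩ := exists_stronglyMeasurable_ae_restrict_iUnion hE hu
    (p := fun t y => f t y ≤ α t) fun p => by
      filter_upwards [hsel p, ae_restrict_mem (hE p)] with t ht htE
      exact (closure_setOf_lt_subset_of_epi_eq_closure (hepi t) _ ht).trans htE.2.le
  refine ⟨x, hx, (ae_restrict_iff' hA).2 ?_⟩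
  filter_upwards [hMcov, (ae_restrict_iff' (MeasurableSet.iUnion hE)).1 hxE]
    with t ⟨n, hn⟩ hxt htA
  obtain ⟨q, hq, hqα⟩ := EReal.exists_rat_btwn_of_lt (hlt t htA)
  obtain ⟨y, hy⟩ := iInf_lt_iff.1 (iInf_lt_of_epi_eq_closure (hepi t) hq)
  exact hxt (mem_iUnion.2 ⟨(n, q), ⟨hn, y, hy⟩, hqα⟩)

/-- measurable selection below a measurable bound strictly above the
infimal value function of an admissible integrand. -/
theorem stmt15 {T X : Type*} [TopologicalSpace T] [MeasurableSpace T]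
    [OpensMeasurableSpace T]
    [NormedAddCommGroup X] [NormedSpace ℝ X] [CompleteSpace X]
    (μ : MeasureTheory.Measure T) [MeasureTheory.SigmaFinite μ] [μ.IsComplete]
    (hreg : InnerRegularM μ)
    (f : T → X → EReal) (hf : AdmissibleIntegrand μ f)
    (A : Set T) (hA : MeasurableSet A)
    (α : T → EReal) (hα : Measurable α)
    (hlt : ∀ t ∈ A, (⨅ x : X, f t x) < α t) :
    ∃ x : T → X, MeasureTheory.StronglyMeasurable x ∧
      ∀ᵐ t ∂(μ.restrict A), f t (x t) ≤ α t :=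
  stmt15_general μ hreg f hf A hA α hα hlt
end

section
/- Let X be a Banach space, 1 < p < ∞, and A := {(u,x,y) ∈ X × L^p([a,b],X) × L^p([a,b],X) : x(t) = u + ∫_a^t y(s) ds for all t ∈ [a,b]}. If (u,x,y) ∈ A and (u*, x*, y*) belongs to the normal cone N_A(u,x,y), then y*(t) = −∫_t^b x*(s) ds for all t ∈ [a,b] and u* = y*(a) = −∫_a^b x*(s) ds. -/
open MeasureTheory Topology Filter Set Pointwise
open scoped ENNReal NNReal

/-! The constraint set is an affine subspace of `X × Lᵖ × Lᵖ` whose direction contains the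
triples `(v, v + ∫_a^· g, g)`, so a normal vector `(u*, x*, y*)` annihilates all of them.
With `g = 0` this identifies `u* = -∫_a^b x*`. With `v = 0` and `g = 1_E w`, Fubini turns
`∫_a^b x*(t) (∫_a^t g)` into `∫_a^b (∫_s^b x*) (g s)`, so `∫_E (y* + ∫_·^b x*) = 0` for every
measurable `E`, which forces `y* = -∫_·^b x*` almost everywhere. -/

section

variable {α E : Type*} [TopologicalSpace α] [MeasurableSpace α] [OpensMeasurableSpace α]
  [T2Space α] [NormedAddCommGroup E] {μ : Measure α} {s : Set α} {f : α → E}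

theorem ContinuousOn.memLp_of_isCompact [IsFiniteMeasureOnCompacts μ] (hs : IsCompact s)
    (hf : ContinuousOn f s) (p : ℝ≥0∞) : MemLp f p (μ.restrict s) := by
  have : IsFiniteMeasure (μ.restrict s) := ⟨by simpa using hs.measure_lt_top⟩
  obtain ⟨C, hC⟩ := hs.exists_bound_of_continuousOn hf
  exact .of_bound (hf.aestronglyMeasurable_of_isCompact hs hs.measurableSet) C
    (ae_restrict_of_forall_mem hs.measurableSet hC)

end

section

variable {E F : Type*} [NormedAddCommGroup E] [NormedSpace ℝ E]
  [NormedAddCommGroup F] [NormedSpace ℝ F] {μ : Measure ℝ} {a b : ℝ}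

theorem continuousOn_primitive_Icc_left [NullSingletonClass μ] {f : ℝ → E}
    (hf : IntegrableOn f (Icc a b) μ) :
    ContinuousOn (fun s => ∫ t in Icc s b, f t ∂μ) (Icc a b) := by
  have hsplit : ∀ s ∈ Icc a b,
      ∫ t in Icc a b, f t ∂μ - ∫ t in Icc a s, f t ∂μ = ∫ t in Icc s b, f t ∂μ := by
    intro s hs
    rw [sub_eq_iff_eq_add', integral_Icc_eq_integral_Ico (y := s), ← setIntegral_union
      (disjoint_left.2 fun _ h₁ h₂ => h₁.2.not_ge h₂.1) measurableSet_Icc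
      (hf.mono_set (Ico_subset_Icc_self.trans (Icc_subset_Icc_right hs.2)))
      (hf.mono_set (Icc_subset_Icc_left hs.1)), Ico_union_Icc_eq_Icc hs.1 hs.2]
  exact (continuousOn_const.sub (intervalIntegral.continuousOn_primitive_Icc hf)).congr
    fun s hs => (hsplit s hs).symm

theorem integral_Icc_apply_integral_Icc [SFinite μ] [CompleteSpace E] [CompleteSpace F]
    {f : ℝ → E →L[ℝ] F} {g : ℝ → E}
    (hf : IntegrableOn f (Icc a b) μ) (hg : IntegrableOn g (Icc a b) μ) :
    ∫ t in Icc a b, f t (∫ s in Icc a t, g s ∂μ) ∂μ =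
      ∫ s in Icc a b, (∫ t in Icc s b, f t ∂μ) (g s) ∂μ := by
  set ν := μ.restrict (Icc a b)
  set F : ℝ × ℝ → F := {z | z.2 ≤ z.1}.indicator fun z => f z.1 (g z.2)
  have hF : Integrable F (ν.prod ν) := by
    refine Integrable.mono' (hf.norm.mul_prod hg.norm) ?_ (.of_forall fun z => ?_)
    · exact (isBoundedBilinearMap_apply.continuous.comp_aestronglyMeasurable
        (hf.aestronglyMeasurable.comp_fst.prodMk hg.aestronglyMeasurable.comp_snd)).indicator
        (measurableSet_le measurable_snd measurable_fst)
    · simp only [F, indicator]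
      split_ifs
      · exact (f z.1).le_opNorm _
      · simp only [norm_zero]; positivity
  have hleft : ∀ᵐ t ∂ν, f t (∫ s in Icc a t, g s ∂μ) = ∫ s, F (t, s) ∂ν := by
    filter_upwards [ae_restrict_mem measurableSet_Icc] with t ht
    have : ν.restrict (Iic t) = μ.restrict (Icc a t) := by
      rw [Measure.restrict_restrict measurableSet_Iic,
        show Iic t ∩ Icc a b = Icc a t by ext; simp; grind]
    rw [← ContinuousLinearMap.integral_comp_comm _ (hg.mono_set (Icc_subset_Icc_right ht.2)),
      ← this, ← integral_indicator measurableSet_Iic]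
    rfl
  have hright : ∀ᵐ s ∂ν, (∫ t in Icc s b, f t ∂μ) (g s) = ∫ t, F (t, s) ∂ν := by
    filter_upwards [ae_restrict_mem measurableSet_Icc] with s hs
    have : ν.restrict (Ici s) = μ.restrict (Icc s b) := by
      rw [Measure.restrict_restrict measurableSet_Ici,
        show Ici s ∩ Icc a b = Icc s b by ext; simp; grind]
    rw [ContinuousLinearMap.integral_apply (hf.mono_set (Icc_subset_Icc_left hs.1)),
      ← this, ← integral_indicator measurableSet_Ici]
    rfl
  rw [integral_congr_ae hleft, integral_congr_ae hright]
  exact integral_integral_swap hF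

end

theorem ContinuousLinearMap.eq_zero_of_forall_apply_nonpos {E : Type*} [TopologicalSpace E]
    [AddCommGroup E] [Module ℝ E] {φ : E →L[ℝ] ℝ} (h : ∀ v, φ v ≤ 0) : φ = 0 :=
  ext fun v => le_antisymm (h v) (by simpa using h (-v))

theorem integral_apply_indicator_const {α E F : Type*} [MeasurableSpace α] [NormedAddCommGroup E]
    [NormedSpace ℝ E] [NormedAddCommGroup F] [NormedSpace ℝ F] {μ : Measure α}
    {Φ : α → E →L[ℝ] F} (hΦ : Integrable Φ μ) {s : Set α} (hs : MeasurableSet s) (w : E) :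
    ∫ x, Φ x (s.indicator (fun _ => w) x) ∂μ = (∫ x in s, Φ x ∂μ) w := by
  rw [ContinuousLinearMap.integral_apply hΦ.integrableOn, ← integral_indicator hs]
  congr 1
  ext x
  by_cases hx : x ∈ s <;> simp [hx]

section

variable {X : Type*} [NormedAddCommGroup X] [NormedSpace ℝ X] {p : ℝ≥0∞} {a b : ℝ}

variable (X p a b) in
def primitiveTriples :
    Set (X × Lp X p (volume.restrict (Icc a b)) × Lp X p (volume.restrict (Icc a b))) :=
  {z | ∀ᵐ t ∂(volume.restrict (Icc a b)), z.2.1 t = z.1 + ∫ s in Icc a t, z.2.2 s}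

variable [Fact (1 ≤ p)]

theorem add_mem_primitiveTriples {u : X} {x y : Lp X p (volume.restrict (Icc a b))}
    (hz : (u, x, y) ∈ primitiveTriples X p a b) (v : X) {g : ℝ → X}
    (hg : MemLp g p (volume.restrict (Icc a b)))
    (hG : MemLp (fun t => v + ∫ s in Icc a t, g s) p (volume.restrict (Icc a b))) :
    (u + v, x + hG.toLp _, y + hg.toLp g) ∈ primitiveTriples X p a b := by
  have hy : IntegrableOn y (Icc a b) := (Lp.memLp y).integrable Fact.out
  have hgi : IntegrableOn g (Icc a b) := hg.integrable Fact.out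
  have hyg : ⇑(y + hg.toLp g) =ᵐ[volume.restrict (Icc a b)] fun s => y s + g s :=
    (Lp.coeFn_add _ _).trans (.add .rfl hg.coeFn_toLp)
  filter_upwards [hz, Lp.coeFn_add x (hG.toLp _), hG.coeFn_toLp,
    ae_restrict_mem measurableSet_Icc] with t hx hxG hGt ht
  have hsub : Icc a t ⊆ Icc a b := Icc_subset_Icc_right ht.2
  have hint : ∫ s in Icc a t, (y + hg.toLp g) s =
      (∫ s in Icc a t, y s) + ∫ s in Icc a t, g s := by
    rw [integral_congr_ae (ae_mono (Measure.restrict_mono hsub le_rfl) hyg)]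
    exact integral_add (hy.mono_set hsub) (hgi.mono_set hsub)
  simp only [hxG, Pi.add_apply, hx, hGt, hint]
  abel

theorem normalCone_primitiveTriples_pairing_le {u : X}
    {x y : Lp X p (volume.restrict (Icc a b))} (hz : (u, x, y) ∈ primitiveTriples X p a b)
    {us : X →L[ℝ] ℝ} {xs ys : ℝ → X →L[ℝ] ℝ}
    (hN : ∀ w ∈ primitiveTriples X p a b,
      us (w.1 - u) + (∫ t in Icc a b, xs t (w.2.1 t - x t)) +
        (∫ t in Icc a b, ys t (w.2.2 t - y t)) ≤ 0)
    (v : X) {g : ℝ → X} (hg : MemLp g p (volume.restrict (Icc a b))) :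
    us v + (∫ t in Icc a b, xs t (v + ∫ s in Icc a t, g s)) +
      (∫ t in Icc a b, ys t (g t)) ≤ 0 := by
  have hG : MemLp (fun t => v + ∫ s in Icc a t, g s) p (volume.restrict (Icc a b)) :=
    (continuousOn_const.add (intervalIntegral.continuousOn_primitive_Icc
      (hg.integrable Fact.out))).memLp_of_isCompact isCompact_Icc p
  have hx : ∀ᵐ t ∂volume.restrict (Icc a b),
      xs t ((x + hG.toLp _) t - x t) = xs t (v + ∫ s in Icc a t, g s) := by
    filter_upwards [Lp.coeFn_add x (hG.toLp _), hG.coeFn_toLp] with t hxG hGt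
    rw [hxG, Pi.add_apply, hGt, add_sub_cancel_left]
  have hy : ∀ᵐ t ∂volume.restrict (Icc a b), ys t ((y + hg.toLp g) t - y t) = ys t (g t) := by
    filter_upwards [Lp.coeFn_add y (hg.toLp g), hg.coeFn_toLp] with t hyg hgt
    rw [hyg, Pi.add_apply, hgt, add_sub_cancel_left]
  have hle := hN _ (add_mem_primitiveTriples hz v hg hG)
  rwa [add_sub_cancel_left, integral_congr_ae hx, integral_congr_ae hy] at hle

end

theorem stmt19_general {X : Type*} [NormedAddCommGroup X] [NormedSpace ℝ X] [CompleteSpace X]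
    (p q : ℝ≥0∞) [Fact (1 ≤ p)] [Fact (1 ≤ q)]
    (a b : ℝ)
    (A : Set (X × MeasureTheory.Lp X p (MeasureTheory.volume.restrict (Set.Icc a b)) ×
      MeasureTheory.Lp X p (MeasureTheory.volume.restrict (Set.Icc a b))))
    (hA : A = {z | ∀ᵐ t ∂(MeasureTheory.volume.restrict (Set.Icc a b)),
        z.2.1 t = z.1 + ∫ s in Set.Icc a t, z.2.2 s})
    (u : X) (x y : MeasureTheory.Lp X p (MeasureTheory.volume.restrict (Set.Icc a b)))
    (hz : (u, x, y) ∈ A)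
    (us : X →L[ℝ] ℝ)
    (xs ys : MeasureTheory.Lp (X →L[ℝ] ℝ) q (MeasureTheory.volume.restrict (Set.Icc a b)))
    (hN : ∀ w ∈ A,
      us (w.1 - u) + (∫ t in Set.Icc a b, (xs t) (w.2.1 t - x t)) +
        (∫ t in Set.Icc a b, (ys t) (w.2.2 t - y t)) ≤ 0) :
    (∀ᵐ t ∂(MeasureTheory.volume.restrict (Set.Icc a b)),
        ys t = - ∫ s in Set.Icc t b, xs s) ∧
    us = - ∫ t in Set.Icc a b, xs t := by
  subst hA
  have hxs : Integrable xs (volume.restrict (Icc a b)) := (Lp.memLp xs).integrable Fact.out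
  have hys : Integrable ys (volume.restrict (Icc a b)) := (Lp.memLp ys).integrable Fact.out
  have hψ : Integrable (fun s => ∫ t in Icc s b, xs t) (volume.restrict (Icc a b)) :=
    (continuousOn_primitive_Icc_left hxs).integrableOn_Icc
  have key := normalCone_primitiveTriples_pairing_le (xs := xs) (ys := ys) hz hN
  have hus : us + ∫ t in Icc a b, xs t = 0 :=
    ContinuousLinearMap.eq_zero_of_forall_apply_nonpos fun v => by
      simpa [ContinuousLinearMap.integral_apply hxs] using key v MemLp.zero
  have hset : ∀ E, MeasurableSet E →
      ∫ s in E, ((∫ t in Icc s b, xs t) + ys s) ∂volume.restrict (Icc a b) = 0 := by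
    intro E hE
    refine ContinuousLinearMap.eq_zero_of_forall_apply_nonpos fun w => ?_
    have hg := memLp_indicator_const (μ := volume.restrict (Icc a b)) p hE w
      (.inr (measure_ne_top _ _))
    have hw := key 0 hg
    simp only [map_zero, zero_add] at hw
    rwa [integral_Icc_apply_integral_Icc hxs (hg.integrable Fact.out),
      integral_apply_indicator_const hψ hE, integral_apply_indicator_const hys hE,
      ← add_apply, ← integral_add hψ.integrableOn hys.integrableOn] at hw
  have hzero := (hψ.add hys).ae_eq_zero_of_forall_setIntegral_eq_zero fun E hE _ => hset E hE
  refine ⟨?_, eq_neg_of_add_eq_zero_left hus⟩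
  filter_upwards [hzero] with t ht
  exact eq_neg_of_add_eq_zero_right ht

/-- Dubois-Reymond lemma: description of the normal cone to the set of
triples `(u, x, y)` with `x(t) = u + ∫_a^t y(s) ds`. -/
theorem stmt19 {X : Type*} [NormedAddCommGroup X] [NormedSpace ℝ X] [CompleteSpace X]
    (p q : ℝ≥0∞) [Fact (1 ≤ p)] [Fact (1 ≤ q)]
    (hp1 : 1 < p) (hp2 : p ≠ ⊤) (hpq : 1/p + 1/q = 1)
    (a b : ℝ) (hab : a ≤ b)
    (A : Set (X × MeasureTheory.Lp X p (MeasureTheory.volume.restrict (Set.Icc a b)) ×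
      MeasureTheory.Lp X p (MeasureTheory.volume.restrict (Set.Icc a b))))
    (hA : A = {z | ∀ᵐ t ∂(MeasureTheory.volume.restrict (Set.Icc a b)),
        z.2.1 t = z.1 + ∫ s in Set.Icc a t, z.2.2 s})
    (u : X) (x y : MeasureTheory.Lp X p (MeasureTheory.volume.restrict (Set.Icc a b)))
    (hz : (u, x, y) ∈ A)
    (us : X →L[ℝ] ℝ)
    (xs ys : MeasureTheory.Lp (X →L[ℝ] ℝ) q (MeasureTheory.volume.restrict (Set.Icc a b)))
    (hN : ∀ w ∈ A,
      us (w.1 - u) + (∫ t in Set.Icc a b, (xs t) (w.2.1 t - x t)) +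
        (∫ t in Set.Icc a b, (ys t) (w.2.2 t - y t)) ≤ 0) :
    (∀ᵐ t ∂(MeasureTheory.volume.restrict (Set.Icc a b)),
        ys t = - ∫ s in Set.Icc t b, xs s) ∧
    us = - ∫ t in Set.Icc a b, xs t :=
  stmt19_general p q a b A hA u x y hz us xs ys hN
end
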